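/- arXiv:2506.15250 — 6 statements merged into one kernel-verified Lean document; each statement's English description precedes it below -/
import Mathlib

section
/- Let H be an abelian normal subgroup of a finite group G and let g ∈ C_G(H). If C_G(g)/H = C_{G/H}(gH) (i.e. the image of C_G(g) in G/H equals the centralizer of gH in G/H and H ≤ C_G(g)), then for every h ∈ H one has C_G(hg) = C_G(h) ∩ C_G(g). -/
/-!
Common definitions: the set `N(G)` of conjugacy class sizes, `A`-groups,
the largest `p`-power `|G||_p` dividing an element of `N(G)`, the Fitting subgroup,
and the natural conjugation action of `G ⧸ H` on an abelian normal subgroup `H`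
(used to form the semidirect product `H ⋊ G/H`).
-/

/-- `N(G)`: the set of conjugacy class sizes (indices of centralizers) of `G`. -/
def indexSet (G : Type*) [Group G] : Set ℕ :=
  {n | ∃ x : G, n = (Subgroup.centralizer {x}).index}

/-- A finite group is an `A`-group if all its Sylow subgroups are abelian. -/
def IsAGroup (G : Type*) [Group G] : Prop :=
  ∀ (p : ℕ), p.Prime → ∀ P : Sylow p G, ∀ a b : (P : Subgroup G), a * b = b * a

/-- `|G||_p`: the highest power of `p` dividing some element of `N(G)`. -/
noncomputable def maxPPart (G : Type*) [Group G] (p : ℕ) : ℕ :=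
  sSup {m | (∃ k : ℕ, m = p ^ k) ∧ ∃ n ∈ indexSet G, m ∣ n}

open scoped Classical in
/-- The natural action of `G ⧸ H` on an abelian normal subgroup `H`, induced by
conjugation (`h ↦ g * h * g⁻¹`); it is used to form the semidirect product `H ⋊ G/H`.
(Junk value — the trivial action — if `H` is not abelian; see `quotConj_eq` below.) -/
noncomputable def quotConj (G : Type*) [Group G] (H : Subgroup G) [H.Normal] :
    G ⧸ H →* MulAut ↥H :=
  if h : H ≤ (MulAut.conjNormal (H := H)).ker then
    QuotientGroup.lift H MulAut.conjNormal h
  else 1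

/-- When `H` is abelian, `quotConj` is indeed the conjugation action `h ↦ g * h * g⁻¹`. -/
theorem quotConj_eq (G : Type*) [Group G] (H : Subgroup G) [H.Normal]
    (hab : ∀ a b : ↥H, a * b = b * a) (g : G) :
    quotConj G H (g : G ⧸ H) = MulAut.conjNormal g := by
  have hker : H ≤ (MulAut.conjNormal (H := H)).ker := by
    intro x hx
    rw [MonoidHom.mem_ker]
    ext y
    have h2 : x * (y : G) = (y : G) * x := congrArg Subtype.val (hab ⟨x, hx⟩ y)
    simp only [MulAut.conjNormal_apply, MulAut.one_apply]
    rw [mul_inv_eq_iff_eq_mul]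
    exact h2
  rw [quotConj, dif_pos hker]
  rfl

/-- The Fitting subgroup: the join of all normal nilpotent subgroups. -/
def fitting (G : Type*) [Group G] : Subgroup G :=
  ⨆ H ∈ {H : Subgroup G | H.Normal ∧ Group.IsNilpotent ↥H}, H

instance fitting_normal (G : Type*) [Group G] : (fitting G).Normal := by
  constructor
  intro n hn g
  rw [fitting, iSup_subtype'] at hn ⊢
  refine Subgroup.iSup_induction _
    (C := fun x => g * x * g⁻¹ ∈
      ⨆ H : {H : Subgroup G | H.Normal ∧ Group.IsNilpotent ↥H}, (H : Subgroup G))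
    hn (fun H x hx => ?_) ?_ (fun x y hx hy => ?_)
  · exact Subgroup.mem_iSup_of_mem H (H.2.1.conj_mem x hx g)
  · simpa using Subgroup.one_mem _
  · have h2 := Subgroup.mul_mem _ hx hy
    have h3 : g * (x * y) * g⁻¹ = (g * x * g⁻¹) * (g * y * g⁻¹) := by group
    show g * (x * y) * g⁻¹ ∈ _
    rwa [h3]

/-- Let `H` be an abelian normal subgroup of a finite group `G` and
`g ∈ C_G(H)`. If `H ≤ C_G(g)` and the image of `C_G(g)` in `G/H` equals `C_{G/H}(gH)`,
then for every `h ∈ H`, `C_G(hg) = C_G(h) ∩ C_G(g)`. -/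
theorem stmt_3 (G : Type*) [Group G] [Finite G] (H : Subgroup G) [H.Normal]
    (hab : ∀ a b : ↥H, a * b = b * a)
    (g : G) (hg : g ∈ Subgroup.centralizer (H : Set G))
    (hHg : H ≤ Subgroup.centralizer {g})
    (hquot : (Subgroup.centralizer {g}).map (QuotientGroup.mk' H)
      = Subgroup.centralizer {(g : G ⧸ H)}) :
    ∀ h ∈ H, Subgroup.centralizer {h * g}
      = Subgroup.centralizer {h} ⊓ Subgroup.centralizer {g} := by
  intro h hh
  ext x
  simp only [Subgroup.mem_inf, Subgroup.mem_centralizer_singleton_iff]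
  constructor
  · intro hx
    -- image of x in G/H centralizes gH
    have hxq : (x : G ⧸ H) ∈ Subgroup.centralizer {(g : G ⧸ H)} := by
      rw [Subgroup.mem_centralizer_singleton_iff]
      have h1 : ((h * g : G) : G ⧸ H) = (g : G ⧸ H) := by
        rw [QuotientGroup.mk_mul, (QuotientGroup.eq_one_iff h).2 hh, one_mul]
      calc ((x : G ⧸ H)) * g = ((x * (h * g) : G) : G ⧸ H) := by
            rw [QuotientGroup.mk_mul, h1]
        _ = (((h * g) * x : G) : G ⧸ H) := by rw [hx]
        _ = (g : G ⧸ H) * x := by rw [QuotientGroup.mk_mul, h1]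
    rw [← hquot] at hxq
    obtain ⟨y, hy, hyx⟩ := hxq
    have hy' : y * g = g * y := Subgroup.mem_centralizer_singleton_iff.1 hy
    have ha : y⁻¹ * x ∈ H := QuotientGroup.eq.mp hyx
    set a := y⁻¹ * x with hadef
    have hxya : x = y * a := by rw [hadef]; group
    have hga : g * a = a * g := (hg a ha).symm
    have hha : h * a = a * h := congrArg Subtype.val (hab ⟨h, hh⟩ ⟨a, ha⟩)
    have swap : ∀ {u v : G}, u * v = v * u → ∀ w : G, u * (v * w) = v * (u * w) :=
      fun huv w => by rw [← mul_assoc, huv, mul_assoc]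
    have key : h * (g * (y * a)) = y * (a * (h * g)) := by
      have := hx.symm
      rw [hxya] at this
      simp only [mul_assoc] at this
      exact this
    have hyh : h * y = y * h := by
      apply mul_right_cancel (b := g * a)
      simp only [mul_assoc]
      calc h * (y * (g * a)) = h * (g * (y * a)) := by rw [swap hy' a]
        _ = y * (a * (h * g)) := key
        _ = y * (h * (a * g)) := by rw [swap hha.symm g]
        _ = y * (h * (g * a)) := by rw [← hga]
    have hxh : x * h = h * x := by
      rw [hxya]
      simp only [mul_assoc]
      rw [hha.symm, swap hyh a]
    refine ⟨hxh, ?_⟩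
    have : h * (x * g) = h * (g * x) := by
      calc h * (x * g) = x * h * g := by rw [← mul_assoc, hxh]
        _ = x * (h * g) := by rw [mul_assoc]
        _ = h * g * x := hx
        _ = h * (g * x) := by rw [mul_assoc]
    exact mul_left_cancel this
  · rintro ⟨h1, h2⟩
    calc x * (h * g) = h * x * g := by rw [← mul_assoc, h1]
      _ = h * (g * x) := by rw [mul_assoc, h2]
      _ = h * g * x := by rw [mul_assoc]
end

section
/- Let G be a finite group and H an abelian normal p-subgroup of G. Let g be a p'-element of G (i.e. p does not divide the order of g) and let h ∈ H. If the order of hg equals the order of g, then hg = y⁻¹gy for some y ∈ H; in particular |C_G(hg)| = |C_G(g)|. -/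
/-- Let `G` be finite, `H` an abelian normal `p`-subgroup of `G`, `g` a
`p'`-element of `G` and `h ∈ H`. If `|hg| = |g|`, then `hg = y⁻¹ g y` for some `y ∈ H`;
in particular `|C_G(hg)| = |C_G(g)|`. -/
theorem stmt_4 (p : ℕ) (hp : p.Prime) (G : Type*) [Group G] [Finite G]
    (H : Subgroup G) [H.Normal] (hab : ∀ a b : ↥H, a * b = b * a)
    (hHp : IsPGroup p ↥H)
    (g : G) (hg : ¬ p ∣ orderOf g) (h : G) (hh : h ∈ H)
    (hord : orderOf (h * g) = orderOf g) :
    (∃ y ∈ H, h * g = y⁻¹ * g * y) ∧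
      Nat.card (Subgroup.centralizer {h * g}) = Nat.card (Subgroup.centralizer {g}) := by
  classical
  haveI : Fact p.Prime := ⟨hp⟩
  letI : CommGroup ↥H := { (inferInstance : Group ↥H) with mul_comm := hab }
  set n := orderOf g with hn
  set σ : MulAut ↥H := MulAut.conjNormal g with hσ
  set h0 : ↥H := ⟨h, hh⟩ with hh0
  -- iterated conjugation
  have hσk : ∀ (k : ℕ) (x : ↥H), (((σ ^ k) x : G)) = g ^ k * (x : G) * (g ^ k)⁻¹ := by
    intro k x
    have : σ ^ k = MulAut.conjNormal (g ^ k) := by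
      rw [hσ, ← map_pow]
    rw [this, MulAut.conjNormal_apply]
  -- partial products
  set P : ℕ → ↥H := fun k => ∏ j ∈ Finset.range k, (σ ^ j) h0 with hP
  have hpow : ∀ k : ℕ, (h * g) ^ k = (P k : G) * g ^ k := by
    intro k
    induction k with
    | zero => simp [hP]
    | succ k ih =>
      have h1 : P (k + 1) = P k * (σ ^ k) h0 := by
        rw [hP]; exact Finset.prod_range_succ _ _
      rw [pow_succ, ih, h1, Subgroup.coe_mul, hσk k h0]
      show (P k : G) * g ^ k * (h * g) = (P k : G) * (g ^ k * h * (g ^ k)⁻¹) * g ^ (k + 1)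
      rw [pow_succ]
      group
  have hPn : P n = 1 := by
    have h1 : (h * g) ^ n = 1 := by
      rw [← hord]; exact pow_orderOf_eq_one _
    have h2 : (g : G) ^ n = 1 := pow_orderOf_eq_one g
    have h3 := hpow n
    rw [h1, h2, mul_one] at h3
    exact Subtype.ext h3.symm
  have hP0 : P 0 = 1 := by simp [hP]
  -- step relation
  have hstep : ∀ i : ℕ, σ (P i) = P (i + 1) * h0⁻¹ := by
    intro i
    have h1 : P (i + 1) = (∏ j ∈ Finset.range i, (σ ^ (j + 1)) h0) * (σ ^ 0) h0 := by
      rw [hP]; exact Finset.prod_range_succ' _ _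
    have h2 : σ (P i) = ∏ j ∈ Finset.range i, (σ ^ (j + 1)) h0 := by
      rw [hP, map_prod]
      refine Finset.prod_congr rfl fun j _ => ?_
      rw [pow_succ']
      rfl
    rw [h1, h2, pow_zero]
    simp
  -- the sum Q
  set Q : ↥H := ∏ i ∈ Finset.range n, P i with hQ
  have hσQ : σ Q = Q * (h0 ^ n)⁻¹ := by
    rw [hQ, map_prod]
    have h1 : ∀ i ∈ Finset.range n, σ (P i) = P (i + 1) * h0⁻¹ := fun i _ => hstep i
    rw [Finset.prod_congr rfl h1, Finset.prod_mul_distrib, Finset.prod_const]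
    congr 1
    · -- ∏ P (i+1) = ∏ P i
      have h2 : (∏ i ∈ Finset.range n, P (i + 1)) * P 0 = ∏ i ∈ Finset.range (n + 1), P i :=
        (Finset.prod_range_succ' _ _).symm
      have h3 : ∏ i ∈ Finset.range (n + 1), P i = (∏ i ∈ Finset.range n, P i) * P n :=
        Finset.prod_range_succ _ _
      rw [hP0, mul_one] at h2
      rw [h2, h3, hPn, mul_one]
    · simp [Finset.card_range, inv_pow]
  -- invert n modulo the order of H
  have hfin : Finite ↥H := inferInstance
  obtain ⟨k, hk⟩ := hHp.exists_card_eq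
  have hcop : Nat.Coprime n (Nat.card ↥H) := by
    rw [hk]
    exact Nat.Coprime.pow_right k ((hp.coprime_iff_not_dvd.mpr hg).symm)
  set A : ℤ := Int.gcdA (n : ℤ) (Nat.card ↥H : ℤ) with hA
  set B : ℤ := Int.gcdB (n : ℤ) (Nat.card ↥H : ℤ) with hB
  have hbez : (1 : ℤ) = (n : ℤ) * A + (Nat.card ↥H : ℤ) * B := by
    have := Int.gcd_eq_gcd_ab (n : ℤ) (Nat.card ↥H : ℤ)
    rwa [Int.gcd_natCast_natCast, hcop] at this
  have hcard1 : ∀ x : ↥H, x ^ ((Nat.card ↥H : ℤ)) = 1 := by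
    intro x
    rw [zpow_natCast]
    exact pow_card_eq_one'
  have hkey : ∀ x : ↥H, x ^ ((n : ℤ) * A) = x := by
    intro x
    have : ((n : ℤ) * A) = 1 - (Nat.card ↥H : ℤ) * B := by omega
    have h2 : x ^ ((Nat.card ↥H : ℤ) * B) = 1 := by rw [zpow_mul, hcard1, one_zpow]
    rw [this, zpow_sub, h2, zpow_one]
    simp
  -- define y
  set y : ↥H := Q ^ (-A) with hy
  have hmain : y⁻¹ * σ y = h0 := by
    rw [hy, map_zpow, hσQ]
    rw [mul_zpow, mul_comm]
    rw [← zpow_natCast h0] at *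
    calc (Q ^ (-A) * ((h0 ^ (n : ℤ))⁻¹) ^ (-A)) * (Q ^ (-A))⁻¹
        = ((h0 ^ (n : ℤ))⁻¹) ^ (-A) := by rw [mul_comm (Q ^ (-A)), mul_inv_cancel_right]
      _ = h0 ^ ((n : ℤ) * A) := by rw [← zpow_neg, ← zpow_mul]; ring_nf
      _ = h0 := hkey h0
  have hconj : h * g = (y : G)⁻¹ * g * (y : G) := by
    have h1 : ((σ y : ↥H) : G) = g * (y : G) * g⁻¹ := by
      rw [hσ]; exact MulAut.conjNormal_apply g y
    have h2 : ((y⁻¹ * σ y : ↥H) : G) = h := by rw [hmain]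
    rw [Subgroup.coe_mul, h1] at h2
    have h3 : (y⁻¹ : ↥H) = (y : G)⁻¹ := rfl
    rw [h3] at h2
    rw [← h2]
    group
  refine ⟨⟨(y : G), y.2, hconj⟩, ?_⟩
  -- centralizer cardinalities
  set c : G := (y : G) with hc
  have hmap : Subgroup.centralizer {h * g}
      = (Subgroup.centralizer {g}).map (MulAut.conj c⁻¹).toMonoidHom := by
    ext z
    rw [Subgroup.mem_centralizer_singleton_iff, Subgroup.mem_map_equiv,
      Subgroup.mem_centralizer_singleton_iff, hconj]
    have hsymm : (MulAut.conj c⁻¹).symm z = c * z * c⁻¹ := by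
      rw [MulAut.conj_symm_apply]; group
    rw [hsymm]
    constructor
    · intro hz
      have := congrArg (fun w => c * w * c⁻¹) hz
      calc c * z * c⁻¹ * g = c * (z * (c⁻¹ * g * c)) * c⁻¹ := by group
        _ = c * (c⁻¹ * g * c * z) * c⁻¹ := by rw [hz]
        _ = g * (c * z * c⁻¹) := by group
    · intro hz
      calc z * (c⁻¹ * g * c) = c⁻¹ * (c * z * c⁻¹ * g) * c := by group
        _ = c⁻¹ * (g * (c * z * c⁻¹)) * c := by rw [hz]
        _ = c⁻¹ * g * c * z := by group
  rw [hmap]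
  exact Nat.card_congr
    ((Subgroup.equivMapOfInjective _ _ (MulAut.conj c⁻¹).injective).toEquiv).symm
end

section
/- Let G be a finite group whose Sylow p-subgroup P is abelian, and let H be a normal p-subgroup of G. Let g ∈ P with g ∉ H, and let T ≤ G be the subgroup containing H with T/H = C_{G/H}(gH). If C_G(g) is a proper subgroup of T, then g = xy where x ∈ C_G(T) with x ≠ 1 and y ∈ H with y ≠ 1; moreover C_G(x) = T, the image of C_G(x) in G/H equals C_{G/H}(xH), and C_G(y) ∩ T = C_G(g). -/
/-!
Since `P` is abelian, `P ≤ C_G(g) ≤ T`, and `T` normalizes the abelian `p`-group `M = ⟨g⟩H ≤ P`,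
moving `g` only inside its coset `gH`. The product of the `T`-conjugates of `g` is then fixed by
`T` and lies in `gⁿH`, where `n = |T : C_T(g)|` is prime to `p`. As `n`-th powers are bijective
on the `p`-groups `M` and `H`, some `x = gc` with `c ∈ H` has `xⁿ` equal to this product, and
injectivity of `n`-th powers makes `x` itself `T`-fixed. Setting `y = c⁻¹`, the remaining claims
follow from `xH = gH`.
-/

open MulAction

section
variable {Γ A : Type*} [Group Γ] [CommGroup A] [MulDistribMulAction Γ A]

theorem smul_prod_orbit (a : A) [Fintype (orbit Γ a)] (γ : Γ) :
    γ • ∏ b : orbit Γ a, (b : A) = ∏ b : orbit Γ a, (b : A) := by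
  rw [Finset.smul_prod']
  exact Equiv.prod_comp (toPerm γ) (fun b : orbit Γ a => (b : A))

theorem prod_orbit_eq_pow_mul (a : A) [Fintype (orbit Γ a)] {B : Subgroup A}
    (ha : ∀ γ : Γ, a⁻¹ * (γ • a) ∈ B) :
    ∃ c ∈ B, ∏ b : orbit Γ a, (b : A) = a ^ Fintype.card (orbit Γ a) * c := by
  refine ⟨∏ b : orbit Γ a, a⁻¹ * b, B.prod_mem fun b _ => ?_, ?_⟩
  · obtain ⟨γ, hγ⟩ := b.2
    exact hγ ▸ ha γ
  · rw [Finset.prod_mul_distrib, Finset.prod_const, Finset.card_univ, inv_pow, mul_inv_cancel_left]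

theorem exists_mul_mem_fixedPoints_of_coprime [Finite A] (a : A) {B : Subgroup A}
    (ha : ∀ γ : Γ, a⁻¹ * (γ • a) ∈ B) (hcop : (Nat.card A).Coprime (stabilizer Γ a).index) :
    ∃ c ∈ B, a * c ∈ fixedPoints Γ A := by
  classical
  have : Fintype (orbit Γ a) := Fintype.ofFinite _
  set n := (stabilizer Γ a).index
  have hn : Fintype.card (orbit Γ a) = n := by
    rw [← Nat.card_eq_fintype_card, Nat.card_coe_set_eq]
    exact (index_stabilizer Γ a).symm
  obtain ⟨c, hcB, hprod⟩ := prod_orbit_eq_pow_mul a ha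
  have hcopB : (Nat.card B).Coprime n := hcop.coprime_dvd_left (Subgroup.card_subgroup_dvd_card B)
  obtain ⟨c', hc'⟩ := (powCoprime hcopB).surjective ⟨c, hcB⟩
  have hc'n : (c' : A) ^ n = c := congrArg Subtype.val hc'
  have hpow : (a * c') ^ n = ∏ b : orbit Γ a, (b : A) := by
    rw [hprod, hn, mul_pow, hc'n]
  refine ⟨c', c'.2, fun γ => (powCoprime hcop).injective ?_⟩
  change (γ • (a * c')) ^ n = (a * c') ^ n
  rw [← smul_pow', hpow, smul_prod_orbit]
end

open Subgroup QuotientGroup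

theorem Sylow.coprime_card_index_of_le {p : ℕ} [Fact p.Prime] {G : Type*} [Group G] [Finite G]
    (P : Sylow p G) {A : Type*} [Group A] [Finite A] (hA : IsPGroup p A) {K : Subgroup G}
    (hPK : (P : Subgroup G) ≤ K) : (Nat.card A).Coprime K.index := by
  obtain ⟨e, he⟩ := IsPGroup.iff_card.mp hA
  rw [he]
  refine Nat.Coprime.pow_left e ((Nat.Prime.coprime_iff_not_dvd Fact.out).mpr fun hdvd => ?_)
  exact P.not_dvd_index (hdvd.trans (index_dvd_of_le hPK))

theorem centralizer_inf_eq_of_mem_centralizer {G : Type*} [Group G] {T : Subgroup G} {x y : G}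
    (hxT : x ∈ centralizer (T : Set G)) (hCT : centralizer {x * y} ≤ T) :
    centralizer {y} ⊓ T = centralizer {x * y} := by
  ext c
  simp only [mem_inf, mem_centralizer_singleton_iff]
  have hcx : ∀ c ∈ T, Commute c x := fun c hc => mem_centralizer_iff.mp hxT c hc
  constructor
  · rintro ⟨hcy, hcT⟩
    exact (hcx c hcT).mul_right hcy
  · intro hcg
    have hcT : c ∈ T := hCT (mem_centralizer_singleton_iff.mpr hcg)
    have hcy : Commute c (x⁻¹ * (x * y)) := (hcx c hcT).inv_right.mul_right hcg
    rw [inv_mul_cancel_left] at hcy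
    exact ⟨hcy, hcT⟩

section
variable {G : Type*} [Group G] {H T : Subgroup G} [H.Normal] {g : G}

theorem mem_iff_mk_commute (hHT : H ≤ T) (hT : T.map (mk' H) = centralizer {(g : G ⧸ H)})
    (c : G) : c ∈ T ↔ (c : G ⧸ H) * g = g * c := by
  rw [← mem_centralizer_singleton_iff, ← hT, ← mk'_apply, ← mem_comap,
    comap_map_eq_self (by rwa [ker_mk'])]

theorem inv_mul_conj_mem (hT : T.map (mk' H) = centralizer {(g : G ⧸ H)}) {t : G}
    (ht : t ∈ T) : g⁻¹ * (t * g * t⁻¹) ∈ H := by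
  have hcomm : (t : G ⧸ H) * g = g * t :=
    mem_centralizer_singleton_iff.mp (hT ▸ mem_map_of_mem (mk' H) ht)
  rw [← QuotientGroup.eq, mk_mul, mk_mul, hcomm, mk_inv, mul_inv_cancel_right]

theorem comap_mk'_zpowers (g : G) : (zpowers (g : G ⧸ H)).comap (mk' H) = zpowers g ⊔ H := by
  rw [← mk'_apply, ← MonoidHom.map_zpowers, comap_map_eq, ker_mk']

theorem le_normalizer_comap_mk'_zpowers (hT : T.map (mk' H) = centralizer {(g : G ⧸ H)}) :
    T ≤ normalizer ((zpowers (g : G ⧸ H)).comap (mk' H) : Set G) := by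
  rw [← comap_normalizer_eq_of_surjective _ (mk'_surjective H), ← map_le_iff_le_comap,
    hT, ← centralizer_closure, ← zpowers_eq_closure]
  exact centralizer_le_normalizer _

theorem exists_mem_centralizer_mul_mem {p : ℕ} [Fact p.Prime] [Finite G] (P : Sylow p G)
    (hPab : ∀ a b : ↥(P : Subgroup G), a * b = b * a) (hHp : IsPGroup p H)
    (hgP : g ∈ (P : Subgroup G)) (hT : T.map (mk' H) = centralizer {(g : G ⧸ H)})
    (hCT : centralizer {g} ≤ T) :
    ∃ x ∈ centralizer (T : Set G), ∃ y ∈ H, g = x * y := by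
  have hPcomm : ∀ {a b : G}, a ∈ (P : Subgroup G) → b ∈ (P : Subgroup G) → a * b = b * a :=
    fun ha hb => congrArg Subtype.val (hPab ⟨_, ha⟩ ⟨_, hb⟩)
  set M := (zpowers (g : G ⧸ H)).comap (mk' H)
  have hMP : M ≤ P :=
    (comap_mk'_zpowers g).le.trans (sup_le (zpowers_le.mpr hgP) (hHp.le_sylow_of_normal P))
  have hPT : (P : Subgroup G) ≤ T := fun c hc =>
    hCT (mem_centralizer_singleton_iff.mpr (hPcomm hc hgP))
  have hgM : g ∈ M := mem_zpowers _
  let _ : CommGroup M :=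
    { M.toGroup with mul_comm := fun a b => Subtype.ext (hPcomm (hMP a.2) (hMP b.2)) }
  let _ : MulDistribMulAction T M :=
    MulDistribMulAction.compHom M (inclusion (le_normalizer_comap_mk'_zpowers hT))
  have hsmul : ∀ (t : T) (a : M), ((t • a : M) : G) = t * a * (t : G)⁻¹ := fun _ _ => rfl
  have hcop : (Nat.card M).Coprime (stabilizer T (⟨g, hgM⟩ : M)).index :=
    (P.subtype hPT).coprime_card_index_of_le (P.isPGroup'.to_le hMP) fun t ht =>
      Subtype.ext ((hsmul t _).trans (mul_inv_eq_of_eq_mul (hPcomm ht hgP)))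
  have hconj : ∀ t : T, (⟨g, hgM⟩ : M)⁻¹ * (t • (⟨g, hgM⟩ : M)) ∈ H.subgroupOf M := by
    intro t
    rw [mem_subgroupOf, coe_mul, coe_inv, hsmul]
    exact inv_mul_conj_mem hT t.2
  obtain ⟨c, hcH, hfix⟩ := exists_mul_mem_fixedPoints_of_coprime _ hconj hcop
  refine ⟨g * c, mem_centralizer_iff.mpr fun t ht => ?_, (c : G)⁻¹, inv_mem hcH,
    (mul_inv_cancel_right g c).symm⟩
  have hfixt : t * (g * c) * t⁻¹ = g * c :=
    (hsmul ⟨t, ht⟩ _).symm.trans (congrArg Subtype.val (hfix ⟨t, ht⟩))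
  exact mul_inv_eq_iff_eq_mul.mp hfixt

theorem centralizer_eq_of_mem_centralizer (hHT : H ≤ T)
    (hT : T.map (mk' H) = centralizer {(g : G ⧸ H)}) {x : G}
    (hxT : x ∈ centralizer (T : Set G)) (hxg : (x : G ⧸ H) = g) : centralizer {x} = T := by
  refine le_antisymm (fun c hc => (mem_iff_mk_commute hHT hT c).mpr ?_)
    (fun t ht => mem_centralizer_singleton_iff.mpr (mem_centralizer_iff.mp hxT t ht))
  rw [← hxg, ← mk_mul, ← mk_mul, mem_centralizer_singleton_iff.mp hc]

end

/-- Let `P` be an abelian Sylow `p`-subgroup of a finite group `G` and `H` a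
normal `p`-subgroup of `G`. Let `g ∈ P` with `g ∉ H`, and let `T` be the subgroup of `G`
containing `H` with `T/H = C_{G/H}(gH)`. If `C_G(g) < T`, then `g = xy` with
`1 ≠ x ∈ C_G(T)` and `1 ≠ y ∈ H`; moreover `C_G(x) = T`, the image of `C_G(x)` in `G/H`
equals `C_{G/H}(xH)`, and `C_G(y) ∩ T = C_G(g)`. -/
theorem stmt_5 (p : ℕ) (hp : p.Prime) (G : Type*) [Group G] [Finite G]
    (P : Sylow p G) (hPab : ∀ a b : ↥(P : Subgroup G), a * b = b * a)
    (H : Subgroup G) [H.Normal] (hHp : IsPGroup p ↥H)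
    (g : G) (hgP : g ∈ (P : Subgroup G)) (hgH : g ∉ H)
    (T : Subgroup G) (hHT : H ≤ T)
    (hT : T.map (QuotientGroup.mk' H) = Subgroup.centralizer {(g : G ⧸ H)})
    (hlt : Subgroup.centralizer {g} < T) :
    ∃ x y : G, x ∈ Subgroup.centralizer (T : Set G) ∧ x ≠ 1 ∧ y ∈ H ∧ y ≠ 1 ∧
      g = x * y ∧
      Subgroup.centralizer {x} = T ∧
      (Subgroup.centralizer {x}).map (QuotientGroup.mk' H)
        = Subgroup.centralizer {(x : G ⧸ H)} ∧
      Subgroup.centralizer {y} ⊓ T = Subgroup.centralizer {g} := by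
  have : Fact p.Prime := ⟨hp⟩
  obtain ⟨x, hxT, y, hyH, rfl⟩ := exists_mem_centralizer_mul_mem P hPab hHp hgP hT hlt.le
  have hxg : (x : G ⧸ H) = (x * y : G) := (mk_mul_of_mem x hyH).symm
  have hCx : centralizer {x} = T := centralizer_eq_of_mem_centralizer hHT hT hxT hxg
  refine ⟨x, y, hxT, ?_, hyH, ?_, rfl, hCx, by rw [hCx, hT, hxg],
    centralizer_inf_eq_of_mem_centralizer hxT hlt.le⟩
  · rintro rfl
    exact hgH (by rwa [one_mul])
  · rintro rfl
    rw [mul_one] at hlt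
    exact hlt.not_ge hCx.ge
end

section
/- Let G be a finite group whose Sylow p-subgroup is abelian, and let H be a normal p-subgroup of G. Then N(G) ⊆ N(H ⋊ G/H), where H ⋊ G/H is the semidirect product with respect to the natural conjugation action of G/H on H. -/
/-!
Write `x = u s` with `u` its `p`-part and `s` its `p'`-part, let `K ≤ G` be the preimage of
`C_{G/H}(xH)` and let `A = C_H(x)`, `I = [x, H]`. Inside an abelian Sylow subgroup `T` of `K`
containing `H` and `u`, conjugation by `x` agrees with conjugation by `s`, whose order is prime
to `p`; hence `H = A × I`. The crossed homomorphism `g ↦ ⁅x, g⁆` of `K` into `H`, projected to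
`A`, vanishes on `T`, so a transfer argument over `K / T` (of index prime to `p`) makes it the
coboundary of some `h₀ ∈ H`. For this `h₀` the centralizer of `(h₀, xH)` in `H ⋊ G/H` is exactly
`A × C_G(x)H/H`, which has the same order as `C_G(x)`.
-/

open scoped commutatorElement

section Commutators

variable {G : Type*} [Group G]

theorem commutatorElement_pow_of_commute {s w : G} (h : Commute s ⁅s, w⁆) (n : ℕ) :
    ⁅s, w⁆ ^ n = ⁅s ^ n, w⁆ := by
  induction n with
  | zero => simp
  | succ n ih =>
    have hconj : s ^ n * ⁅s, w⁆ * (s ^ n)⁻¹ = ⁅s, w⁆ := by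
      rw [(h.pow_left n).eq, mul_inv_cancel_right]
    rw [pow_succ', ih, ← hconj]
    simp only [commutatorElement_def]
    group

theorem commutatorElement_eq_one_of_commute {s w : G} {m : ℕ} (hs : s ^ m = 1)
    (h : Commute s ⁅s, w⁆) (hm : (orderOf ⁅s, w⁆).Coprime m) : ⁅s, w⁆ = 1 := by
  have hpow : ⁅s, w⁆ ^ m = 1 := by
    rw [commutatorElement_pow_of_commute h, hs, commutatorElement_one_left]
  exact orderOf_eq_one_iff.mp (hm.eq_one_of_dvd (orderOf_dvd_of_pow_eq_one hpow))

theorem commutatorElement_eq_one_of_isPGroup {H : Subgroup G} {p : ℕ} (hHp : IsPGroup p H)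
    {s w : G} {m : ℕ} (hs : s ^ m = 1) (hpm : p.Coprime m) (hw : ⁅s, w⁆ ∈ H)
    (hsw : Commute s ⁅s, w⁆) : ⁅s, w⁆ = 1 :=
  commutatorElement_eq_one_of_commute hs hsw (Subgroup.orderOf_mk _ hw ▸ hHp.orderOf_coprime hpm _)

theorem commutatorElement_mul_left_of_commute {a s t : G} (hat : Commute a t)
    (ha : Commute a ⁅s, t⁆) : ⁅a * s, t⁆ = ⁅s, t⁆ := by
  rw [commutatorElement_mul_left_eq_conj_mul, commutatorElement_eq_one_iff_commute.2 hat,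
    mul_one, ha.eq, mul_inv_cancel_right]

theorem IsOfFinOrder.exists_pPart_mul_eq {x : G} (hx : IsOfFinOrder x) {p : ℕ} (hp : p.Prime) :
    ∃ u s : G, u * s = x ∧ Commute u s ∧ IsPGroup p (Subgroup.zpowers u) ∧
      ∃ m, p.Coprime m ∧ s ^ m = 1 := by
  obtain ⟨a, m, hpm, hxm⟩ := Nat.exists_eq_pow_mul_and_not_dvd hx.orderOf_pos.ne' p hp.ne_one
  have hcop : (p ^ a).Coprime m := Nat.Coprime.pow_left _ ((hp.coprime_iff_not_dvd).2 hpm)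
  have hbez := Nat.gcd_eq_gcd_ab (p ^ a) m
  rw [hcop.gcd_eq_one, Nat.cast_one] at hbez
  have hpow : ∀ k : ℤ, x ^ ((p ^ a * m : ℕ) * k) = 1 := fun k => by
    rw [zpow_mul, ← hxm, zpow_natCast, pow_orderOf_eq_one, one_zpow]
  refine ⟨x ^ (m * (p ^ a).gcdB m : ℤ), x ^ ((p ^ a : ℕ) * (p ^ a).gcdA m : ℤ),
    ?_, Commute.zpow_zpow_self x _ _, ?_, m, (hp.coprime_iff_not_dvd).2 hpm, ?_⟩
  · rw [← zpow_add, add_comm, ← hbez, zpow_one]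
  · refine IsPGroup.of_card_dvd_pow (n := a) ?_
    rw [Nat.card_zpowers]
    refine orderOf_dvd_of_pow_eq_one ?_
    rw [← zpow_natCast, ← zpow_mul, ← hpow ((p ^ a).gcdB m)]
    congr 1
    push_cast
    ring
  · rw [← zpow_natCast, ← zpow_mul, ← hpow ((p ^ a).gcdA m)]
    congr 1
    push_cast
    ring

end Commutators

def IsCrossedHom {Γ M : Type*} [Group Γ] [Group M] (ρ : Γ →* MulAut M) (d : Γ → M) : Prop :=
  ∀ a b, d (a * b) = d a * ρ a (d b)

namespace IsCrossedHom

theorem comp {Γ M : Type*} [Group Γ] [Group M] {ρ : Γ →* MulAut M} {d : Γ → M}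
    (hd : IsCrossedHom ρ d) {π : M →* M} (hπ : ∀ a v, π (ρ a v) = ρ a (π v)) :
    IsCrossedHom ρ (π ∘ d) := by
  intro a b
  simp only [Function.comp_apply, hd a b, map_mul, hπ]

open scoped IsMulCommutative

variable {Γ M : Type*} [Group Γ] [Group M] [IsMulCommutative M] {ρ : Γ →* MulAut M}
  {d : Γ → M} {S : Subgroup Γ}

theorem pow_index_eq [Fintype (Γ ⧸ S)] (hd : IsCrossedHom ρ d) (hS : ∀ t ∈ S, d t = 1)
    (a : Γ) : d a ^ S.index = (∏ j : Γ ⧸ S, d j.out) * (ρ a (∏ j : Γ ⧸ S, d j.out))⁻¹ := by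
  have hcoset : ∀ j : Γ ⧸ S, ρ a (d j.out) = (d a)⁻¹ * d (a • j).out := by
    intro j
    obtain ⟨t, ht, hat⟩ : ∃ t ∈ S, a * j.out = (a • j).out * t :=
      ⟨((a • j).out)⁻¹ * (a * j.out), by
        rw [← QuotientGroup.eq, QuotientGroup.out_eq', ← smul_eq_mul,
          MulAction.Quotient.mk_smul_out], by group⟩
    rw [eq_inv_mul_iff_mul_eq, ← hd, hat, hd, hS t ht, map_one, mul_one]
  have hprod : ρ a (∏ j : Γ ⧸ S, d j.out) = (d a)⁻¹ ^ S.index * ∏ j : Γ ⧸ S, d j.out := by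
    rw [map_prod, Finset.prod_congr rfl fun j _ => hcoset j, Finset.prod_mul_distrib,
      Finset.prod_const, Finset.card_univ, ← Nat.card_eq_fintype_card, ← Subgroup.index]
    congr 1
    exact Fintype.prod_equiv (MulAction.toPerm a) _ _ fun j => rfl
  rw [hprod, mul_inv_rev, inv_pow, inv_inv, mul_inv_cancel_left]

theorem exists_eq_mul_inv_of_coprime [S.FiniteIndex] (hd : IsCrossedHom ρ d)
    (hS : ∀ t ∈ S, d t = 1) (hcop : (Nat.card M).Coprime S.index) :
    ∃ h₀ : M, ∀ a, d a = h₀ * (ρ a h₀)⁻¹ := by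
  have : Fintype (Γ ⧸ S) := Fintype.ofFinite _
  obtain ⟨h₀, hh₀ : h₀ ^ S.index = _⟩ := hcop.pow_left_bijective.2 (∏ j : Γ ⧸ S, d j.out)
  refine ⟨h₀, fun a => hcop.pow_left_bijective.1 ?_⟩
  show d a ^ S.index = (h₀ * (ρ a h₀)⁻¹) ^ S.index
  rw [pow_index_eq hd hS a, ← hh₀, mul_pow, inv_pow, map_pow]

end IsCrossedHom

namespace Subgroup

theorem card_subgroupOf_comm {G : Type*} [Group G] (H K : Subgroup G) :
    Nat.card (H.subgroupOf K) = Nat.card (K.subgroupOf H) := by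
  rw [← inf_subgroupOf_right, ← inf_subgroupOf_right K,
    Nat.card_congr (subgroupOfEquivOfLe inf_le_right).toEquiv,
    Nat.card_congr (subgroupOfEquivOfLe inf_le_right).toEquiv, inf_comm]

theorem commutatorElement_mem {G : Type*} [Group G] (H : Subgroup G) [H.Normal] (x : G) {k : G}
    (hk : k ∈ H) : ⁅x, k⁆ ∈ H :=
  H.mul_mem (‹H.Normal›.conj_mem k hk x) (H.inv_mem hk)

namespace IsComplement'

variable {M : Type*} [Group M] {A I : Subgroup M} [I.Normal] (h : A.IsComplement' I)

noncomputable def proj : M →* M :=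
  A.subtype.comp (h.QuotientMulEquiv.toMonoidHom.comp (QuotientGroup.mk' I))

theorem proj_mem (v : M) : h.proj v ∈ A := (h.QuotientMulEquiv _).2

theorem proj_of_mem {a : M} (ha : a ∈ A) : h.proj a = a :=
  congrArg Subtype.val (h.QuotientMulEquiv.apply_symm_apply ⟨a, ha⟩)

theorem proj_eq_one_iff {v : M} : h.proj v = 1 ↔ v ∈ I := by
  rw [proj, MonoidHom.comp_apply, A.coe_subtype, OneMemClass.coe_eq_one, MonoidHom.comp_apply,
    MulEquiv.coe_toMonoidHom, MulEquiv.map_eq_one_iff, QuotientGroup.mk'_apply,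
    QuotientGroup.eq_one_iff]

theorem inv_proj_mul_mem (v : M) : (h.proj v)⁻¹ * v ∈ I := by
  rw [← QuotientGroup.eq]
  apply h.QuotientMulEquiv.injective
  exact Subtype.ext (h.proj_of_mem (h.proj_mem v))

theorem proj_map {F : Type*} [FunLike F M M] [MonoidHomClass F M M] {σ : F}
    (hA : ∀ a ∈ A, σ a ∈ A) (hI : ∀ b ∈ I, σ b ∈ I) (v : M) :
    h.proj (σ v) = σ (h.proj v) := by
  conv_lhs => rw [← mul_inv_cancel_left (h.proj v) v]
  rw [map_mul, map_mul, h.proj_of_mem (hA _ (h.proj_mem v)),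
    h.proj_eq_one_iff.2 (hI _ (h.inv_proj_mul_mem v)), mul_one]

end IsComplement'

end Subgroup

section ConjugationCocycle

variable {G : Type*} [Group G] (H : Subgroup G) [H.Normal] (x : G)

def centralizerMod : Subgroup G :=
  (Subgroup.centralizer {(x : G ⧸ H)}).comap (QuotientGroup.mk' H)

variable {H x} in
theorem mem_centralizerMod {g : G} : g ∈ centralizerMod H x ↔ ⁅x, g⁆ ∈ H := by
  rw [centralizerMod, Subgroup.mem_comap, Subgroup.mem_centralizer_singleton_iff,
    ← QuotientGroup.eq_one_iff, ← QuotientGroup.mk'_apply H ⁅x, g⁆, map_commutatorElement,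
    commutatorElement_eq_one_iff_mul_comm]
  exact eq_comm

theorem le_centralizerMod : H ≤ centralizerMod H x :=
  fun _ hk => mem_centralizerMod.2 (H.commutatorElement_mem x hk)

def conjCocycle (g : centralizerMod H x) : H :=
  ⟨⁅x, (g : G)⁆, mem_centralizerMod.1 g.2⟩

@[simp]
theorem coe_conjCocycle (g : centralizerMod H x) : (conjCocycle H x g : G) = ⁅x, (g : G)⁆ := rfl

theorem isCrossedHom_conjCocycle :
    IsCrossedHom (MulAut.conjNormal.comp (centralizerMod H x).subtype) (conjCocycle H x) := by
  intro a b
  apply Subtype.ext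
  simp only [coe_conjCocycle, Subgroup.coe_mul, MonoidHom.comp_apply, Subgroup.coe_subtype,
    MulAut.conjNormal_apply, commutatorElement_mul_right_eq_mul_conj, mul_assoc]

variable [IsMulCommutative H]

def commutatorHom : H →* H where
  toFun k := ⟨⁅x, (k : G)⁆, H.commutatorElement_mem x k.2⟩
  map_one' := Subtype.ext (commutatorElement_one_right x)
  map_mul' a b := Subtype.ext <| by
    simp only [Subgroup.coe_mul]
    rw [commutatorElement_mul_right_eq_mul_conj, mul_assoc ⁅x, (a : G)⁆,
      setLike_mul_comm a.2 (H.commutatorElement_mem x b.2), ← mul_assoc, mul_inv_cancel_right]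

@[simp]
theorem coe_commutatorHom (k : H) : (commutatorHom H x k : G) = ⁅x, (k : G)⁆ := rfl

theorem commutatorHom_apply (k : H) : commutatorHom H x k = MulAut.conjNormal x k * k⁻¹ := rfl

variable {H x} in
theorem mem_ker_commutatorHom {k : H} : k ∈ (commutatorHom H x).ker ↔ Commute x k := by
  rw [MonoidHom.mem_ker, ← OneMemClass.coe_eq_one, coe_commutatorHom,
    commutatorElement_eq_one_iff_commute]

theorem ker_commutatorHom :
    (commutatorHom H x).ker = (Subgroup.centralizer {x}).subgroupOf H := by
  ext k
  rw [mem_ker_commutatorHom, Subgroup.mem_subgroupOf, Subgroup.mem_centralizer_singleton_iff]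
  exact eq_comm

variable {x}

theorem commutatorHom_conjNormal {g : G} (hg : g ∈ centralizerMod H x) (k : H) :
    commutatorHom H x (MulAut.conjNormal g k) = MulAut.conjNormal g (commutatorHom H x k) := by
  apply Subtype.ext
  have hgx : ⁅g, x⁆ ∈ H := by
    rw [← commutatorElement_inv]; exact H.inv_mem (mem_centralizerMod.1 hg)
  have hk : g * k * g⁻¹ ∈ H := ‹H.Normal›.conj_mem k k.2 g
  have hconj : g * x * g⁻¹ = ⁅g, x⁆ * x := by rw [commutatorElement_def, inv_mul_cancel_right]
  simp only [coe_commutatorHom, MulAut.conjNormal_apply, conjugate_commutatorElement]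
  rw [hconj, commutatorElement_mul_left_of_commute (setLike_mul_comm hgx hk)
    (setLike_mul_comm hgx (H.commutatorElement_mem x hk))]

theorem commutatorElement_mul_of_mem {k g : G} (hk : k ∈ H) (hg : g ∈ centralizerMod H x) :
    ⁅x, k * g⁆ = ⁅x, k⁆ * ⁅x, g⁆ := by
  rw [commutatorElement_mul_right_eq_mul_conj, mul_assoc ⁅x, k⁆,
    setLike_mul_comm hk (mem_centralizerMod.1 hg), ← mul_assoc, mul_inv_cancel_right]

theorem mk_mem_map_centralizer_iff (g : centralizerMod H x) :
    ((g : G) : G ⧸ H) ∈ (Subgroup.centralizer {x}).map (QuotientGroup.mk' H) ↔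
      conjCocycle H x g ∈ (commutatorHom H x).range := by
  constructor
  · rintro ⟨d, hd, hdg⟩
    have hdgH : d * (g : G)⁻¹ ∈ H := by
      rw [← div_eq_mul_inv, ← QuotientGroup.eq_iff_div_mem]; exact hdg
    have hprod : ⁅x, d * (g : G)⁻¹⁆ * ⁅x, (g : G)⁆ = 1 := by
      rw [← commutatorElement_mul_of_mem H hdgH g.2, inv_mul_cancel_right,
        commutatorElement_eq_one_iff_mul_comm, Subgroup.mem_centralizer_singleton_iff.1 hd]
    refine ⟨(⟨d * (g : G)⁻¹, hdgH⟩ : H)⁻¹, Subtype.ext ?_⟩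
    rw [map_inv, Subgroup.coe_inv, coe_commutatorHom]
    exact inv_eq_of_mul_eq_one_right hprod
  · rintro ⟨k, hk⟩
    have hkg : ⁅x, (k : G)⁻¹ * g⁆ = 1 := by
      rw [commutatorElement_mul_of_mem H (H.inv_mem k.2) g.2, ← Subgroup.coe_inv,
        ← coe_commutatorHom, map_inv, hk, Subgroup.coe_inv, coe_conjCocycle, inv_mul_cancel]
    refine ⟨(k : G)⁻¹ * g, ?_, ?_⟩
    · exact Subgroup.mem_centralizer_singleton_iff.2
        (commutatorElement_eq_one_iff_mul_comm.1 hkg).symm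
    · rw [QuotientGroup.mk'_apply, QuotientGroup.mk_mul,
        (QuotientGroup.eq_one_iff _).2 (H.inv_mem k.2), one_mul]

variable (x) in
theorem card_centralizer_eq_card_ker_mul :
    Nat.card (Subgroup.centralizer {x}) = Nat.card (commutatorHom H x).ker *
      Nat.card ((Subgroup.centralizer {x}).map (QuotientGroup.mk' H)) := by
  rw [← ((QuotientGroup.mk' H).comp (Subgroup.centralizer {x}).subtype).ker.card_mul_index,
    Subgroup.index_ker, MonoidHom.range_comp, Subgroup.range_subtype, ← MonoidHom.comap_ker,
    QuotientGroup.ker_mk', ker_commutatorHom, Subgroup.card_subgroupOf_comm]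
  rfl

theorem isCrossedHom_proj_conjCocycle
    (hAI : (commutatorHom H x).ker.IsComplement' (commutatorHom H x).range) :
    IsCrossedHom (MulAut.conjNormal.comp (centralizerMod H x).subtype)
      (hAI.proj ∘ conjCocycle H x) := by
  refine (isCrossedHom_conjCocycle H x).comp fun g v =>
    hAI.proj_map (σ := MulAut.conjNormal (g : G)) ?_ ?_ v
  · intro a ha
    rw [MonoidHom.mem_ker] at ha ⊢
    rw [commutatorHom_conjNormal H g.2, ha, map_one]
  · rintro _ ⟨k, rfl⟩
    exact ⟨MulAut.conjNormal (g : G) k, commutatorHom_conjNormal H g.2 k⟩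

end ConjugationCocycle

section SemidirectProduct

variable {G : Type*} [Group G] (H : Subgroup G) [H.Normal] [IsMulCommutative H] {x : G}

theorem semidirectProduct_mk_mem_centralizer_iff (h₀ h : H) (g : G) :
    (⟨h, g⟩ : H ⋊[quotConj G H] (G ⧸ H)) ∈ Subgroup.centralizer {⟨h₀, x⟩} ↔
      g ∈ centralizerMod H x ∧ commutatorHom H x h * (h₀ * (MulAut.conjNormal g h₀)⁻¹) = 1 := by
  rw [Subgroup.mem_centralizer_singleton_iff, SemidirectProduct.ext_iff, and_comm]
  simp only [SemidirectProduct.mul_left, SemidirectProduct.mul_right,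
    quotConj_eq G H fun a b => Subtype.ext (setLike_mul_comm a.2 b.2)]
  refine and_congr (by rw [centralizerMod, Subgroup.mem_comap,
    Subgroup.mem_centralizer_singleton_iff]; rfl) ?_
  rw [commutatorHom_apply, ← mul_inv_eq_one, ← inv_eq_one, mul_inv_rev, inv_inv, mul_inv_rev]
  congr! 1
  ac_rfl

variable (hAI : (commutatorHom H x).ker.IsComplement' (commutatorHom H x).range) (h₀ : H)
  (hh₀ : ∀ g : centralizerMod H x,
    hAI.proj (conjCocycle H x g) = h₀ * (MulAut.conjNormal (g : G) h₀)⁻¹)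
include hh₀

theorem mem_centralizer_semidirectProduct_iff (z : H ⋊[quotConj G H] (G ⧸ H)) :
    z ∈ Subgroup.centralizer {⟨h₀, x⟩} ↔ z.left ∈ (commutatorHom H x).ker ∧
      z.right ∈ (Subgroup.centralizer {x}).map (QuotientGroup.mk' H) := by
  obtain ⟨h, g, rfl⟩ : ∃ (h : H) (g : G), z = ⟨h, g⟩ :=
    ⟨z.left, z.right.out, by rw [QuotientGroup.out_eq']⟩
  rw [semidirectProduct_mk_mem_centralizer_iff, MonoidHom.mem_ker]
  constructor
  · rintro ⟨hg, hcomm⟩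
    rw [← hh₀ ⟨g, hg⟩] at hcomm
    have hτ : commutatorHom H x h = 1 := by
      refine Subgroup.disjoint_def.1 hAI.disjoint.symm ⟨h, rfl⟩ ?_
      rw [eq_inv_of_mul_eq_one_left hcomm]
      exact inv_mem (hAI.proj_mem _)
    rw [hτ, one_mul, hAI.proj_eq_one_iff, ← mk_mem_map_centralizer_iff] at hcomm
    exact ⟨hτ, hcomm⟩
  · rintro ⟨hτ, hR⟩
    have hg : g ∈ centralizerMod H x := by
      have := Subgroup.map_centralizer_le_centralizer_image _ _ hR
      rwa [Set.image_singleton] at this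
    refine ⟨hg, ?_⟩
    rw [hτ, one_mul, ← hh₀ ⟨g, hg⟩, hAI.proj_eq_one_iff]
    exact (mk_mem_map_centralizer_iff H ⟨g, hg⟩).1 hR

theorem card_centralizer_semidirectProduct :
    Nat.card (Subgroup.centralizer {(⟨h₀, x⟩ : H ⋊[quotConj G H] (G ⧸ H))}) =
      Nat.card (Subgroup.centralizer {x}) := by
  rw [card_centralizer_eq_card_ker_mul H, ← Nat.card_prod]
  exact Nat.card_congr ((SemidirectProduct.equivProd.subtypeEquiv
    (mem_centralizer_semidirectProduct_iff H hAI h₀ hh₀)).trans Equiv.subtypeProdEquivProd)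

theorem index_centralizer_semidirectProduct [Finite G] :
    (Subgroup.centralizer {(⟨h₀, x⟩ : H ⋊[quotConj G H] (G ⧸ H))}).index =
      (Subgroup.centralizer {x}).index := by
  have hcard := (Subgroup.centralizer {(⟨h₀, x⟩ : H ⋊[quotConj G H] (G ⧸ H))}).card_mul_index
  rw [card_centralizer_semidirectProduct H hAI h₀ hh₀, SemidirectProduct.card,
    mul_comm (Nat.card H), ← Subgroup.card_eq_card_quotient_mul_card_subgroup,
    ← (Subgroup.centralizer {x}).card_mul_index] at hcard
  exact Nat.eq_of_mul_eq_mul_left Nat.card_pos hcard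

end SemidirectProduct

section CoprimeAction

variable {G : Type*} [Group G] (H : Subgroup G) [H.Normal] [IsMulCommutative H] {p : ℕ}
  (hHp : IsPGroup p H) {x s : G} {m : ℕ} (hs : s ^ m = 1) (hpm : p.Coprime m)
include hHp hs hpm

theorem disjoint_ker_range_commutatorHom (hxs : ∀ k ∈ H, ⁅x, k⁆ = ⁅s, k⁆) :
    Disjoint (commutatorHom H x).ker (commutatorHom H x).range := by
  rw [Subgroup.disjoint_def]
  rintro _ hvA ⟨k, rfl⟩
  have hv : (commutatorHom H x k : G) = ⁅s, (k : G)⁆ := hxs k k.2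
  have hvH : ⁅s, (k : G)⁆ ∈ H := hv ▸ (commutatorHom H x k).2
  have hsv : Commute s ⁅s, (k : G)⁆ := by
    rw [← commutatorElement_eq_one_iff_commute, ← hxs _ hvH, commutatorElement_eq_one_iff_commute,
      ← hv]
    exact mem_ker_commutatorHom.1 hvA
  exact Subtype.ext (hv.trans (commutatorElement_eq_one_of_isPGroup hHp hs hpm hvH hsv))

theorem isComplement'_ker_range_commutatorHom [Finite H] (hxs : ∀ k ∈ H, ⁅x, k⁆ = ⁅s, k⁆) :
    (commutatorHom H x).ker.IsComplement' (commutatorHom H x).range :=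
  Subgroup.isComplement'_of_card_mul_and_disjoint
    (by rw [← Subgroup.index_ker, Subgroup.card_mul_index])
    (disjoint_ker_range_commutatorHom H hHp hs hpm hxs)

variable {T : Subgroup G} [IsMulCommutative T] (hHT : H ≤ T) (hxs : ∀ t ∈ T, ⁅x, t⁆ = ⁅s, t⁆)
  (hAI : (commutatorHom H x).ker.IsComplement' (commutatorHom H x).range)
include hHT hxs

theorem proj_conjCocycle_eq_one (t : centralizerMod H x) (ht : (t : G) ∈ T) :
    hAI.proj (conjCocycle H x t) = 1 := by
  set α := hAI.proj (conjCocycle H x t)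
  obtain ⟨k, hk⟩ := hAI.inv_proj_mul_mem (conjCocycle H x t)
  have hkT : ⁅s, (k : G)⁻¹⁆ ∈ T := by
    rw [← hxs _ (hHT (H.inv_mem k.2))]
    exact hHT (H.commutatorElement_mem x (H.inv_mem k.2))
  -- Since `T` is abelian, `α` is a commutator with `s`; it lies in `C_H(x)`, so `s` centralizes it.
  have hα : (α : G) = ⁅s, t * (k : G)⁻¹⁆ := by
    have : α = conjCocycle H x t * commutatorHom H x k⁻¹ := by
      rw [map_inv, hk, mul_inv_rev, inv_inv, mul_inv_cancel_left]
    rw [this, Subgroup.coe_mul, coe_commutatorHom, Subgroup.coe_inv, coe_conjCocycle, hxs t ht,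
      hxs _ (hHT (H.inv_mem k.2)), commutatorElement_mul_right_eq_mul_conj, mul_assoc _ (t : G),
      setLike_mul_comm ht hkT, ← mul_assoc, mul_inv_cancel_right]
  have hsα : Commute s α := by
    rw [← commutatorElement_eq_one_iff_commute, ← hxs _ (hHT α.2),
      commutatorElement_eq_one_iff_commute]
    exact mem_ker_commutatorHom.1 (hAI.proj_mem _)
  exact Subtype.ext (hα.trans (commutatorElement_eq_one_of_isPGroup hHp hs hpm (hα ▸ α.2)
    (hα ▸ hsα)))

theorem exists_proj_conjCocycle_eq [Finite G] [Fact p.Prime]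
    (hT : ¬ p ∣ (T.subgroupOf (centralizerMod H x)).index) :
    ∃ h₀ : H, ∀ g : centralizerMod H x,
      hAI.proj (conjCocycle H x g) = h₀ * (MulAut.conjNormal (g : G) h₀)⁻¹ := by
  obtain ⟨n, hn⟩ := IsPGroup.iff_card.1 hHp
  refine (isCrossedHom_proj_conjCocycle H hAI).exists_eq_mul_inv_of_coprime
    (fun t ht => proj_conjCocycle_eq_one H hHp hs hpm hHT hxs hAI t
      (Subgroup.mem_subgroupOf.1 ht)) ?_
  rw [hn]
  exact Nat.Coprime.pow_left n ((Nat.Prime.coprime_iff_not_dvd Fact.out).2 hT)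

end CoprimeAction

theorem exists_isMulCommutative_le_of_isPGroup {G : Type*} [Group G] [Finite G] {p : ℕ}
    [Fact p.Prime] (hSyl : ∀ P : Sylow p G, IsMulCommutative P) {W K : Subgroup G}
    (hWK : W ≤ K) (hW : IsPGroup p W) :
    ∃ T : Subgroup G, IsMulCommutative T ∧ W ≤ T ∧ ¬ p ∣ (T.subgroupOf K).index := by
  obtain ⟨P, hP⟩ := (hW.of_equiv (Subgroup.subgroupOfEquivOfLe hWK).symm).exists_le_sylow
  obtain ⟨Q, hQ⟩ := (P.isPGroup'.map K.subtype).exists_le_sylow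
  refine ⟨(P : Subgroup K).map K.subtype, .of_setLike_mul_comm fun a ha b hb =>
    setLike_mul_comm (hQ ha) (hQ hb), ?_, ?_⟩
  · rw [← Subgroup.map_subgroupOf_eq_of_le hWK]
    exact Subgroup.map_mono hP
  · rw [← Subgroup.comap_subtype, Subgroup.comap_map_eq_self_of_injective K.subtype_injective]
    exact P.not_dvd_index

theorem exists_index_centralizer_eq {G : Type*} [Group G] [Finite G] {p : ℕ} (hp : p.Prime)
    (hSyl : ∀ P : Sylow p G, IsMulCommutative P) (H : Subgroup G) [H.Normal]
    [IsMulCommutative H] (hHp : IsPGroup p H) (x : G) :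
    ∃ y : H ⋊[quotConj G H] (G ⧸ H),
      (Subgroup.centralizer {y}).index = (Subgroup.centralizer {x}).index := by
  have := Fact.mk hp
  obtain ⟨u, s, rfl, hus, hu, m, hpm, hs⟩ := (isOfFinOrder_of_finite x).exists_pPart_mul_eq hp
  have huK : u ∈ centralizerMod H (u * s) := by
    rw [mem_centralizerMod, commutatorElement_eq_one_iff_commute.2
      ((Commute.refl u).mul_right hus).symm]
    exact H.one_mem
  obtain ⟨T, hTc, hWT, hT⟩ := exists_isMulCommutative_le_of_isPGroup hSyl
    (sup_le (le_centralizerMod H _) (Subgroup.zpowers_le.2 huK)) (hHp.to_sup_of_normal_left hu)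
  have hHT : H ≤ T := le_sup_left.trans hWT
  have huT : u ∈ T := hWT (Subgroup.mem_sup_right (Subgroup.mem_zpowers u))
  have hxs : ∀ t ∈ T, ⁅u * s, t⁆ = ⁅s, t⁆ := fun t ht =>
    have hut : Commute u t := setLike_mul_comm huT ht
    commutatorElement_mul_left_of_commute hut
      (((hus.mul_right hut).mul_right hus.inv_right).mul_right hut.inv_right)
  have hAI := isComplement'_ker_range_commutatorHom H hHp hs hpm fun k hk => hxs k (hHT hk)
  obtain ⟨h₀, hh₀⟩ := exists_proj_conjCocycle_eq H hHp hs hpm hHT hxs hAI hT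
  exact ⟨⟨h₀, (u * s : G)⟩, index_centralizer_semidirectProduct H hAI h₀ hh₀⟩

/-- Let `G` be a finite group whose Sylow `p`-subgroups are abelian and `H`
a normal `p`-subgroup of `G`. Then `N(G) ⊆ N(H ⋊ G/H)` for the natural conjugation
action of `G/H` on `H` (which is well defined since such an `H` is abelian). -/
theorem stmt_6 (p : ℕ) (hp : p.Prime) (G : Type*) [Group G] [Finite G]
    (hSyl : ∀ P : Sylow p G, ∀ a b : ↥(P : Subgroup G), a * b = b * a)
    (H : Subgroup G) [H.Normal] (hHp : IsPGroup p ↥H) :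
    indexSet G ⊆ indexSet (SemidirectProduct ↥H (G ⧸ H) (quotConj G H)) := by
  have hSyl' (P : Sylow p G) : IsMulCommutative P := isMulCommutative_iff.2 (hSyl P)
  have := Fact.mk hp
  obtain ⟨P, hHP⟩ := hHp.exists_le_sylow
  have : IsMulCommutative H :=
    .of_setLike_mul_comm fun a ha b hb => setLike_mul_comm (hHP ha) (hHP hb)
  rintro _ ⟨x, rfl⟩
  obtain ⟨y, hy⟩ := exists_index_centralizer_eq hp hSyl' H hHp x
  exact ⟨y, hy.symm⟩
end

section
/- Let G be a finite group and let H, N be abelian normal subgroups of G with H ∩ N = 1. Let G_1 = H ⋊ G/H (semidirect product for the natural conjugation action) and let N_1 = {(1, gH) : g ∈ N} ≤ G_1, an abelian normal subgroup of G_1 isomorphic to N. Then the groups HN ⋊ G/(HN) and N_1 ⋊ G_1/N_1 are isomorphic, via the map (hn, gHN) ↦ ((1, nH), (h, gH)N_1) for h ∈ H, n ∈ N, g ∈ G. -/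
namespace Stmt9

open SemidirectProduct
open scoped Pointwise

variable {G : Type*} [Group G] {H N : Subgroup G} [H.Normal] [N.Normal]

theorem comm_of_disjoint (hHN : H ⊓ N = ⊥) {h n : G} (hh : h ∈ H) (hn : n ∈ N) :
    h * n = n * h := by
  have key : h * n * h⁻¹ * n⁻¹ ∈ H ⊓ N := by
    refine ⟨?_, ?_⟩
    · have h1 : n * h⁻¹ * n⁻¹ ∈ H := ‹H.Normal›.conj_mem _ (H.inv_mem hh) n
      have h2 := H.mul_mem hh h1
      rwa [show h * (n * h⁻¹ * n⁻¹) = h * n * h⁻¹ * n⁻¹ by group] at h2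
    · exact N.mul_mem (‹N.Normal›.conj_mem _ hn h) (N.inv_mem hn)
  rw [hHN, Subgroup.mem_bot] at key
  have h3 : h * n = (h * n * h⁻¹ * n⁻¹) * (n * h) := by group
  rw [h3, key, one_mul]

/-- The canonical map `H × N →* H ⊔ N`. -/
noncomputable def j (hHN : H ⊓ N = ⊥) : ↥H × ↥N →* ↥(H ⊔ N) :=
  MonoidHom.noncommCoprod (Subgroup.inclusion le_sup_left) (Subgroup.inclusion le_sup_right)
    (fun a b => Subtype.ext (comm_of_disjoint hHN a.2 b.2))

theorem j_bijective (hHN : H ⊓ N = ⊥) : Function.Bijective (j hHN) := by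
  constructor
  · rw [injective_iff_map_eq_one]
    rintro ⟨a, b⟩ hab
    have hval : (a : G) * b = 1 := congrArg Subtype.val hab
    have ha : (a : G) ∈ H ⊓ N := ⟨a.2, by
      rw [show (a : G) = (b : G)⁻¹ from eq_inv_of_mul_eq_one_left hval]
      exact N.inv_mem b.2⟩
    rw [hHN, Subgroup.mem_bot] at ha
    have hb : (b : G) = 1 := by rwa [ha, one_mul] at hval
    have ha' : a = 1 := Subtype.ext ha
    have hb' : b = 1 := Subtype.ext hb
    rw [ha', hb']
    rfl
  · rintro ⟨x, hx⟩
    have hx' : x ∈ (H : Set G) * (N : Set G) := by rw [← Subgroup.mul_normal]; exact hx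
    obtain ⟨h, hh, n, hn, rfl⟩ := hx'
    exact ⟨(⟨h, hh⟩, ⟨n, hn⟩), Subtype.ext rfl⟩

theorem sup_abelian (hHab : ∀ a b : ↥H, a * b = b * a) (hNab : ∀ a b : ↥N, a * b = b * a)
    (hHN : H ⊓ N = ⊥) : ∀ a b : ↥(H ⊔ N), a * b = b * a := by
  intro a b
  obtain ⟨x, rfl⟩ := (j_bijective hHN).2 a
  obtain ⟨y, rfl⟩ := (j_bijective hHN).2 b
  rw [← map_mul, ← map_mul]
  congr 1
  exact Prod.ext (hHab _ _) (hNab _ _)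


section Homs

variable (N1 : Subgroup (SemidirectProduct ↥H (G ⧸ H) (quotConj G H))) [N1.Normal]

/-- `h ↦ ((1), (h,1)N₁)`. -/
noncomputable def fH : ↥H →*
    SemidirectProduct ↥N1 ((SemidirectProduct ↥H (G ⧸ H) (quotConj G H)) ⧸ N1)
      (quotConj (SemidirectProduct ↥H (G ⧸ H) (quotConj G H)) N1) :=
  inr.comp ((QuotientGroup.mk' N1).comp inl)

variable (hN1 : N1 = Subgroup.map inr (N.map (QuotientGroup.mk' H)))

/-- `n ↦ (1, nH) ∈ N₁`. -/
noncomputable def toN1 : ↥N →* ↥N1 :=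
  ((inr : (G ⧸ H) →* SemidirectProduct ↥H (G ⧸ H) (quotConj G H)).comp
    ((QuotientGroup.mk' H).comp N.subtype)).codRestrict N1
    (fun n => by rw [hN1]; exact ⟨_, ⟨n.1, n.2, rfl⟩, rfl⟩)

noncomputable def fN : ↥N →*
    SemidirectProduct ↥N1 ((SemidirectProduct ↥H (G ⧸ H) (quotConj G H)) ⧸ N1)
      (quotConj (SemidirectProduct ↥H (G ⧸ H) (quotConj G H)) N1) :=
  inl.comp (toN1 N1 hN1)

theorem toN1_surjective : Function.Surjective (toN1 N1 hN1) := by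
  rintro ⟨a, ha⟩
  rw [hN1] at ha
  obtain ⟨y, hy, rfl⟩ := Subgroup.mem_map.mp ha
  obtain ⟨n, hn, rfl⟩ := Subgroup.mem_map.mp hy
  exact ⟨⟨n, hn⟩, rfl⟩

include hN1 in
theorem N1_abelian (hNab : ∀ a b : ↥N, a * b = b * a) : ∀ a b : ↥N1, a * b = b * a := by
  intro a b
  obtain ⟨n, rfl⟩ := toN1_surjective N1 hN1 a
  obtain ⟨m, rfl⟩ := toN1_surjective N1 hN1 b
  rw [← map_mul, ← map_mul, hNab]

end Homs

/-- In any semidirect product, `inr g * inl n = inl (φ g n) * inr g`. -/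
theorem inr_mul_inl' {N' G' : Type*} [Group N'] [Group G'] {φ : G' →* MulAut N'}
    (g : G') (n : N') : (inr g * inl n : N' ⋊[φ] G') = inl (φ g n) * inr g := by
  ext <;> simp


section Main

variable (hHab : ∀ a b : ↥H, a * b = b * a) (hNab : ∀ a b : ↥N, a * b = b * a)
  (hHN : H ⊓ N = ⊥)
  (N1 : Subgroup (SemidirectProduct ↥H (G ⧸ H) (quotConj G H))) [N1.Normal]
  (hN1 : N1 = Subgroup.map inr (N.map (QuotientGroup.mk' H)))

include hHab hHN in
theorem conj_fix (h : ↥H) (n : ↥N) :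
    (quotConj G H ((n : G) : G ⧸ H)) h = h := by
  rw [quotConj_eq G H hHab]
  apply Subtype.ext
  rw [MulAut.conjNormal_apply]
  rw [mul_inv_eq_iff_eq_mul]
  exact (comm_of_disjoint hHN h.2 n.2).symm

include hHab hHN in
theorem inl_inr_comm (h : ↥H) (n : ↥N) :
    (inr ((n : G) : G ⧸ H) : SemidirectProduct ↥H (G ⧸ H) (quotConj G H)) * inl h
      = inl h * inr ((n : G) : G ⧸ H) := by
  rw [inr_mul_inl', conj_fix hHab hHN]

include hHab hNab hHN hN1 in
theorem key_fix (h : ↥H) (n : ↥N) :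
    (quotConj (SemidirectProduct ↥H (G ⧸ H) (quotConj G H)) N1
        (((inl h : SemidirectProduct ↥H (G ⧸ H) (quotConj G H))) :
          (SemidirectProduct ↥H (G ⧸ H) (quotConj G H)) ⧸ N1)) (toN1 N1 hN1 n)
      = toN1 N1 hN1 n := by
  rw [quotConj_eq _ N1 (N1_abelian N1 hN1 hNab) (inl h)]
  apply Subtype.ext
  rw [MulAut.conjNormal_apply]
  show (inl h : SemidirectProduct ↥H (G ⧸ H) (quotConj G H)) * inr ((n : G) : G ⧸ H) * (inl h)⁻¹
    = inr ((n : G) : G ⧸ H)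
  rw [mul_inv_eq_iff_eq_mul]
  exact (inl_inr_comm hHab hHN h n).symm

include hHab hNab hHN hN1 in
theorem commHN : ∀ (a : ↥H) (b : ↥N), Commute (fH N1 a) (fN N1 hN1 b) := by
  intro a b
  show fH N1 a * fN N1 hN1 b = fN N1 hN1 b * fH N1 a
  show inr (QuotientGroup.mk (inl a)) * inl (toN1 N1 hN1 b) = _
  rw [inr_mul_inl']
  rw [show (QuotientGroup.mk (inl a) :
      (SemidirectProduct ↥H (G ⧸ H) (quotConj G H)) ⧸ N1)
    = ((inl a : SemidirectProduct ↥H (G ⧸ H) (quotConj G H)) :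
      (SemidirectProduct ↥H (G ⧸ H) (quotConj G H)) ⧸ N1) from rfl]
  rw [key_fix hHab hNab hHN N1 hN1]
  rfl

/-- The quotient map `G → G₁/N₁`. -/
noncomputable def bar : G →* (SemidirectProduct ↥H (G ⧸ H) (quotConj G H)) ⧸ N1 :=
  (QuotientGroup.mk' N1).comp
    ((inr : (G ⧸ H) →* SemidirectProduct ↥H (G ⧸ H) (quotConj G H)).comp (QuotientGroup.mk' H))

include hN1 in
theorem bar_ker : ∀ x ∈ H ⊔ N, bar N1 x = 1 := by
  intro x hx
  refine (sup_le (fun h hh => ?_) (fun n hn => ?_) :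
    H ⊔ N ≤ (bar (H := H) N1).ker) hx
  · show bar N1 h = 1
    have : ((h : G) : G ⧸ H) = 1 := (QuotientGroup.eq_one_iff h).2 hh
    simp only [bar, MonoidHom.comp_apply, QuotientGroup.mk'_apply, this, map_one]
  · show bar N1 n = 1
    simp only [bar, MonoidHom.comp_apply, QuotientGroup.mk'_apply]
    rw [QuotientGroup.eq_one_iff, hN1]
    exact ⟨_, ⟨n, hn, rfl⟩, rfl⟩

noncomputable def f2 : G ⧸ (H ⊔ N) →*
    SemidirectProduct ↥N1 ((SemidirectProduct ↥H (G ⧸ H) (quotConj G H)) ⧸ N1)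
      (quotConj (SemidirectProduct ↥H (G ⧸ H) (quotConj G H)) N1) :=
  inr.comp (QuotientGroup.lift (H ⊔ N) (bar N1) (bar_ker N1 hN1))

theorem f2_mk (g : G) :
    f2 N1 hN1 (g : G ⧸ (H ⊔ N)) = inr (QuotientGroup.mk (inr ((g : G ⧸ H)))) := rfl

noncomputable def f1 : ↥(H ⊔ N) →*
    SemidirectProduct ↥N1 ((SemidirectProduct ↥H (G ⧸ H) (quotConj G H)) ⧸ N1)
      (quotConj (SemidirectProduct ↥H (G ⧸ H) (quotConj G H)) N1) :=
  ((fH N1).noncommCoprod (fN N1 hN1) (commHN hHab hNab hHN N1 hN1)).comp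
    ((MulEquiv.ofBijective (j hHN) (j_bijective hHN)).symm.toMonoidHom)

theorem e_j (x : ↥H × ↥N) :
    (MulEquiv.ofBijective (j hHN) (j_bijective hHN)).symm (j hHN x) = x := by
  rw [show j hHN x = (MulEquiv.ofBijective (j hHN) (j_bijective hHN)) x from rfl,
    MulEquiv.symm_apply_apply]

theorem f1_inclH (a : ↥H) :
    f1 hHab hNab hHN N1 hN1 (Subgroup.inclusion le_sup_left a) = fH N1 a := by
  have h1 : Subgroup.inclusion (le_sup_left : H ≤ H ⊔ N) a = j hHN (a, 1) := by
    apply Subtype.ext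
    show (a : G) = (a : G) * ((1 : ↥N) : G)
    simp
  rw [h1]
  show ((fH N1).noncommCoprod (fN N1 hN1) (commHN hHab hNab hHN N1 hN1))
    ((MulEquiv.ofBijective (j hHN) (j_bijective hHN)).symm (j hHN (a, 1))) = fH N1 a
  rw [e_j, MonoidHom.noncommCoprod_apply]
  simp

theorem f1_inclN (b : ↥N) :
    f1 hHab hNab hHN N1 hN1 (Subgroup.inclusion le_sup_right b) = fN N1 hN1 b := by
  have h1 : Subgroup.inclusion (le_sup_right : N ≤ H ⊔ N) b = j hHN (1, b) := by
    apply Subtype.ext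
    show (b : G) = ((1 : ↥H) : G) * (b : G)
    simp
  rw [h1]
  show ((fH N1).noncommCoprod (fN N1 hN1) (commHN hHab hNab hHN N1 hN1))
    ((MulEquiv.ofBijective (j hHN) (j_bijective hHN)).symm (j hHN (1, b))) = fN N1 hN1 b
  rw [e_j, MonoidHom.noncommCoprod_apply]
  simp

set_option maxHeartbeats 1000000 in
theorem lemA (g : G) (a : ↥H) :
    f1 hHab hNab hHN N1 hN1
        ((quotConj G (H ⊔ N) (g : G ⧸ (H ⊔ N))) (Subgroup.inclusion le_sup_left a))
      = f2 N1 hN1 (g : G ⧸ (H ⊔ N)) * f1 hHab hNab hHN N1 hN1 (Subgroup.inclusion le_sup_left a)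
        * (f2 N1 hN1 (g : G ⧸ (H ⊔ N)))⁻¹ := by
  have hA : (quotConj G (H ⊔ N) (g : G ⧸ (H ⊔ N))) (Subgroup.inclusion le_sup_left a)
      = Subgroup.inclusion le_sup_left ((quotConj G H (g : G ⧸ H)) a) := by
    rw [quotConj_eq _ _ (sup_abelian hHab hNab hHN), quotConj_eq _ _ hHab]
    apply Subtype.ext
    rw [MulAut.conjNormal_apply]
    exact (MulAut.conjNormal_apply _ _).symm
  rw [hA, f1_inclH, f1_inclH, f2_mk]
  show inr.comp (QuotientGroup.mk' N1) (inl ((quotConj G H (g : G ⧸ H)) a))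
    = inr.comp (QuotientGroup.mk' N1) (inr (g : G ⧸ H))
      * inr.comp (QuotientGroup.mk' N1) (inl a)
      * (inr.comp (QuotientGroup.mk' N1) (inr (g : G ⧸ H)))⁻¹
  rw [inl_aut]
  simp only [map_mul, map_inv, MonoidHom.comp_apply]

set_option maxHeartbeats 1000000 in
theorem lemB (g : G) (b : ↥N) :
    f1 hHab hNab hHN N1 hN1
        ((quotConj G (H ⊔ N) (g : G ⧸ (H ⊔ N))) (Subgroup.inclusion le_sup_right b))
      = f2 N1 hN1 (g : G ⧸ (H ⊔ N)) * f1 hHab hNab hHN N1 hN1 (Subgroup.inclusion le_sup_right b)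
        * (f2 N1 hN1 (g : G ⧸ (H ⊔ N)))⁻¹ := by
  have hB : (quotConj G (H ⊔ N) (g : G ⧸ (H ⊔ N))) (Subgroup.inclusion le_sup_right b)
      = Subgroup.inclusion le_sup_right (⟨g * b * g⁻¹, ‹N.Normal›.conj_mem _ b.2 g⟩ : ↥N) := by
    rw [quotConj_eq _ _ (sup_abelian hHab hNab hHN)]
    apply Subtype.ext
    exact MulAut.conjNormal_apply _ _
  rw [hB, f1_inclN, f1_inclN, f2_mk]
  show inl (toN1 N1 hN1 ⟨g * b * g⁻¹, ‹N.Normal›.conj_mem _ b.2 g⟩)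
    = inr (QuotientGroup.mk (inr (g : G ⧸ H)))
      * inl (toN1 N1 hN1 b)
      * (inr ((QuotientGroup.mk (inr (g : G ⧸ H)) :
          (SemidirectProduct ↥H (G ⧸ H) (quotConj G H)) ⧸ N1)))⁻¹
  rw [show ((inr ((QuotientGroup.mk (inr (g : G ⧸ H)) :
          (SemidirectProduct ↥H (G ⧸ H) (quotConj G H)) ⧸ N1))) :
        SemidirectProduct ↥N1 _ (quotConj _ N1))⁻¹
      = inr ((QuotientGroup.mk (inr (g : G ⧸ H)) :
          (SemidirectProduct ↥H (G ⧸ H) (quotConj G H)) ⧸ N1))⁻¹ from (map_inv _ _).symm]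
  rw [← inl_aut]
  congr 1
  rw [quotConj_eq _ N1 (N1_abelian N1 hN1 hNab)]
  apply Subtype.ext
  rw [MulAut.conjNormal_apply]
  show (inr.comp (QuotientGroup.mk' H) : G →* SemidirectProduct ↥H (G ⧸ H) (quotConj G H))
        (g * b * g⁻¹)
    = (inr.comp (QuotientGroup.mk' H) : G →* _) g
      * (inr.comp (QuotientGroup.mk' H) : G →* _) (b : G)
      * ((inr.comp (QuotientGroup.mk' H) : G →* _) g)⁻¹
  rw [map_mul, map_mul, map_inv]

theorem compat : ∀ q : G ⧸ (H ⊔ N),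
    (f1 hHab hNab hHN N1 hN1).comp ((quotConj G (H ⊔ N) q).toMonoidHom)
      = (MulAut.conj ((f2 N1 hN1) q)).toMonoidHom.comp (f1 hHab hNab hHN N1 hN1) := by
  intro q
  refine QuotientGroup.induction_on q ?_
  intro g
  refine MonoidHom.ext fun x => ?_
  obtain ⟨⟨a, b⟩, rfl⟩ := (j_bijective hHN).2 x
  simp only [MonoidHom.comp_apply, MulEquiv.coe_toMonoidHom, MulAut.conj_apply]
  have hx : j hHN (a, b)
      = Subgroup.inclusion le_sup_left a * Subgroup.inclusion le_sup_right b := rfl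
  rw [hx, map_mul, map_mul, map_mul, lemA hHab hNab hHN N1 hN1, lemB hHab hNab hHN N1 hN1]
  group

set_option maxHeartbeats 1000000 in
theorem phi_formula (h n g : G) (hh : h ∈ H) (hn : n ∈ N) :
    SemidirectProduct.lift (f1 hHab hNab hHN N1 hN1) (f2 N1 hN1)
        (compat hHab hNab hHN N1 hN1)
        ⟨⟨h * n, Subgroup.mul_mem _ (Subgroup.mem_sup_left hh) (Subgroup.mem_sup_right hn)⟩,
          (g : G ⧸ (H ⊔ N))⟩
      = ⟨toN1 N1 hN1 ⟨n, hn⟩,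
          QuotientGroup.mk (⟨⟨h, hh⟩, (g : G ⧸ H)⟩ :
            SemidirectProduct ↥H (G ⧸ H) (quotConj G H))⟩ := by
  rw [mk_eq_inl_mul_inr, map_mul, lift_inl, lift_inr]
  rw [show (⟨h * n, Subgroup.mul_mem _ (Subgroup.mem_sup_left hh)
        (Subgroup.mem_sup_right hn)⟩ : ↥(H ⊔ N))
    = Subgroup.inclusion le_sup_left ⟨h, hh⟩ * Subgroup.inclusion le_sup_right ⟨n, hn⟩
    from Subtype.ext rfl]
  rw [map_mul, f1_inclH, f1_inclN, (commHN hHab hNab hHN N1 hN1 ⟨h, hh⟩ ⟨n, hn⟩).eq]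
  rw [mul_assoc]
  rw [show fH N1 ⟨h, hh⟩ * f2 N1 hN1 (g : G ⧸ (H ⊔ N))
      = inr (QuotientGroup.mk (⟨⟨h, hh⟩, (g : G ⧸ H)⟩ :
          SemidirectProduct ↥H (G ⧸ H) (quotConj G H))) from by
    show inr (QuotientGroup.mk ((inl ⟨h, hh⟩ : SemidirectProduct ↥H (G ⧸ H) (quotConj G H))))
        * inr (QuotientGroup.mk ((inr (g : G ⧸ H) : SemidirectProduct ↥H (G ⧸ H) (quotConj G H))))
      = inr (QuotientGroup.mk (⟨⟨h, hh⟩, (g : G ⧸ H)⟩ :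
          SemidirectProduct ↥H (G ⧸ H) (quotConj G H)))
    rw [← map_mul, ← QuotientGroup.mk_mul, ← mk_eq_inl_mul_inr]]
  rw [show fN N1 hN1 ⟨n, hn⟩ = inl (toN1 N1 hN1 ⟨n, hn⟩) from rfl, ← mk_eq_inl_mul_inr]

include hHab hNab hHN hN1 in
set_option maxHeartbeats 1000000 in
theorem phi_injective :
    Function.Injective (SemidirectProduct.lift (f1 hHab hNab hHN N1 hN1) (f2 N1 hN1)
      (compat hHab hNab hHN N1 hN1)) := by
  rw [injective_iff_map_eq_one]
  rintro ⟨⟨s, hs⟩, q⟩ hx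
  obtain ⟨g, rfl⟩ := QuotientGroup.mk_surjective q
  have hs' : s ∈ (H : Set G) * (N : Set G) := by rw [← Subgroup.mul_normal]; exact hs
  obtain ⟨h, hh, n, hn, rfl⟩ := hs'
  rw [phi_formula hHab hNab hHN N1 hN1 h n g hh hn] at hx
  have h1 := congrArg SemidirectProduct.left hx
  have h2 := congrArg SemidirectProduct.right hx
  simp only [one_left, one_right] at h1 h2
  have hn1 : n = 1 := by
    have h3 := congrArg SemidirectProduct.right (congrArg Subtype.val h1)
    have h4 : ((n : G) : G ⧸ H) = 1 := h3
    have h5 : n ∈ H ⊓ N := ⟨(QuotientGroup.eq_one_iff _).1 h4, hn⟩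
    rwa [hHN, Subgroup.mem_bot] at h5
  have hmem : (⟨⟨h, hh⟩, (g : G ⧸ H)⟩ :
      SemidirectProduct ↥H (G ⧸ H) (quotConj G H)) ∈ N1 := (QuotientGroup.eq_one_iff _).1 h2
  rw [hN1] at hmem
  obtain ⟨y, hy, hy2⟩ := hmem
  obtain ⟨n', hn', rfl⟩ := hy
  have hL := congrArg SemidirectProduct.left hy2
  have hR := congrArg SemidirectProduct.right hy2
  simp only [left_inr, right_inr] at hL hR
  have hh1 : h = 1 := by
    have := congrArg Subtype.val hL.symm
    simpa using this
  have hgmem : g ∈ H ⊔ N := by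
    have h6 : ((n' : G) : G ⧸ H) = (g : G ⧸ H) := by simpa using hR
    have h7 : n'⁻¹ * g ∈ H := QuotientGroup.leftRel_apply.mp (Quotient.exact h6)
    have h8 : g = n' * (n'⁻¹ * g) := by group
    rw [h8]
    exact Subgroup.mul_mem _ (Subgroup.mem_sup_right hn') (Subgroup.mem_sup_left h7)
  refine SemidirectProduct.ext ?_ ?_
  · refine Subtype.ext ?_
    show h * n = 1
    rw [hh1, hn1, one_mul]
  · exact (QuotientGroup.eq_one_iff g).2 hgmem

include hHab hNab hHN hN1 in
set_option maxHeartbeats 1000000 in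
theorem phi_surjective :
    Function.Surjective (SemidirectProduct.lift (f1 hHab hNab hHN N1 hN1) (f2 N1 hN1)
      (compat hHab hNab hHN N1 hN1)) := by
  rintro ⟨⟨a, ha⟩, c⟩
  obtain ⟨x, rfl⟩ := QuotientGroup.mk_surjective c
  obtain ⟨xh, q⟩ := x
  obtain ⟨g, rfl⟩ := QuotientGroup.mk_surjective q
  rw [hN1] at ha
  obtain ⟨y, hy, rfl⟩ := ha
  obtain ⟨n, hn, rfl⟩ := hy
  refine ⟨⟨⟨(xh : G) * n, Subgroup.mul_mem _ (Subgroup.mem_sup_left xh.2)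
    (Subgroup.mem_sup_right hn)⟩, (g : G ⧸ (H ⊔ N))⟩, ?_⟩
  rw [phi_formula hHab hNab hHN N1 hN1 (xh : G) n g xh.2 hn]
  exact SemidirectProduct.ext (Subtype.ext rfl) rfl

end Main

end Stmt9



/-- Let `H, N` be abelian normal subgroups of a finite group `G` with
`H ∩ N = 1`. Let `G₁ = H ⋊ G/H` and let `N₁ = {(1, gH) : g ∈ N} ≤ G₁` (the image of `N`
in `G/H` embedded via `inr`), an abelian normal subgroup of `G₁` isomorphic to `N`.
Then `HN ⋊ G/(HN)` and `N₁ ⋊ G₁/N₁` are isomorphic via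
`(hn, gHN) ↦ ((1, nH), (h, gH)N₁)`. -/
theorem stmt_9 (G : Type*) [Group G] [Finite G]
    (H N : Subgroup G) [H.Normal] [N.Normal]
    (hHab : ∀ a b : ↥H, a * b = b * a) (hNab : ∀ a b : ↥N, a * b = b * a)
    (hHN : H ⊓ N = ⊥)
    (N1 : Subgroup (SemidirectProduct ↥H (G ⧸ H) (quotConj G H))) [N1.Normal]
    (hN1 : N1 = Subgroup.map SemidirectProduct.inr (N.map (QuotientGroup.mk' H))) :
    ∃ ψ : SemidirectProduct ↥(H ⊔ N) (G ⧸ (H ⊔ N)) (quotConj G (H ⊔ N)) ≃*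
        SemidirectProduct ↥N1 ((SemidirectProduct ↥H (G ⧸ H) (quotConj G H)) ⧸ N1)
          (quotConj (SemidirectProduct ↥H (G ⧸ H) (quotConj G H)) N1),
      ∀ (h n g : G) (hh : h ∈ H) (hn : n ∈ N),
        ψ ⟨⟨h * n, Subgroup.mul_mem _ (Subgroup.mem_sup_left hh) (Subgroup.mem_sup_right hn)⟩,
            (g : G ⧸ (H ⊔ N))⟩ =
          ⟨⟨SemidirectProduct.inr (n : G ⧸ H), by
              rw [hN1]
              exact Subgroup.mem_map_of_mem _ (Subgroup.mem_map_of_mem _ hn)⟩,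
            ((⟨⟨h, hh⟩, (g : G ⧸ H)⟩ :
                SemidirectProduct ↥H (G ⧸ H) (quotConj G H)) :
              (SemidirectProduct ↥H (G ⧸ H) (quotConj G H)) ⧸ N1)⟩ := by
  subst hN1
  refine ⟨MulEquiv.ofBijective
    (SemidirectProduct.lift (Stmt9.f1 hHab hNab hHN _ rfl) (Stmt9.f2 _ rfl)
      (Stmt9.compat hHab hNab hHN _ rfl))
    ⟨Stmt9.phi_injective hHab hNab hHN _ rfl, Stmt9.phi_surjective hHab hNab hHN _ rfl⟩, ?_⟩
  intro h n g hh hn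
  show SemidirectProduct.lift (Stmt9.f1 hHab hNab hHN _ rfl) (Stmt9.f2 _ rfl)
      (Stmt9.compat hHab hNab hHN _ rfl)
      ⟨⟨h * n, Subgroup.mul_mem _ (Subgroup.mem_sup_left hh) (Subgroup.mem_sup_right hn)⟩,
        (g : G ⧸ (H ⊔ N))⟩ = _
  rw [Stmt9.phi_formula hHab hNab hHN _ rfl h n g hh hn]
  exact SemidirectProduct.ext (Subtype.ext rfl) rfl
end

section
/- Let G be a finite A-group that is an internal semidirect product G = F ⋊ T, where F = F(G) is the Fitting subgroup of G and T is a complement. Let x ∈ F and y ∈ T with xy = yx. Then C_G(xy) = C_G(x) ∩ C_G(y); moreover, if C_G(x)C_G(y) = G, then Ind(G, xy) = Ind(G, x) · Ind(G, y). -/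
/-!
In an `A`-group a nilpotent subgroup is abelian, and two abelian normal subgroups generate a
subgroup of nilpotency class at most two; hence `F = F(G)` is abelian.

Write `g = f t` with `f ∈ F`, `t ∈ T`. Comparing the `F`- and `T`-components of
`g (x y) = (x y) g` gives `t y = y t` and an element `e ∈ F` with `y f y⁻¹ = f e` and
`t x t⁻¹ = x e`. As `y` commutes with `x` and `t`, the second identity shows that `e` commutes
with `y`, so `y ^ n f y ^ (-n) = f e ^ n` for all `n`. For a prime `q`, a `q`-element of `G`
commutes with every `q`-element of `F`, since together they lie in one abelian `q`-subgroup.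
Applied to `y ^ m'` and `f ^ m`, where `m'` and `m` are the `q'`-parts of the orders of `y` and
`f`, this shows that `e ^ m` is killed both by `m'` and by a power of `q`, so `q` does not divide
the order of `e`. Hence `e = 1`, and `g` centralizes `x` and `y`.
The index formula is `|G : A ∩ B| = |G : A| |G : B|` for subgroups with `A B = G`.
-/

open scoped Pointwise commutatorElement

namespace Subgroup

variable {G : Type*} [Group G]

theorem relIndex_eq_index_of_mul_eq_univ {H K : Subgroup G}
    (hHK : (H : Set G) * (K : Set G) = Set.univ) : H.relIndex K = H.index := by
  have hsmul (k : K) : k • ((1 : G) : G ⧸ H) = ((k : G) : G ⧸ H) := by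
    change (k : G) • ((1 : G) : G ⧸ H) = _
    rw [MulAction.Quotient.smul_mk, smul_eq_mul, mul_one]
  have hstab : MulAction.stabilizer K ((1 : G) : G ⧸ H) = H.subgroupOf K := by
    ext k
    rw [MulAction.mem_stabilizer_iff, hsmul, mem_subgroupOf, QuotientGroup.eq, mul_one,
      inv_mem_iff]
  have horbit : MulAction.orbit K ((1 : G) : G ⧸ H) = Set.univ := by
    refine Set.eq_univ_of_forall fun c => QuotientGroup.induction_on c fun g => ?_
    obtain ⟨h, hh, k, hk, hg⟩ : g⁻¹ ∈ (H : Set G) * (K : Set G) := hHK ▸ Set.mem_univ _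
    refine ⟨⟨k⁻¹, K.inv_mem hk⟩, (hsmul _).trans ?_⟩
    have hkg : k * g = h⁻¹ := by
      rw [← inv_inv g, ← hg]
      group
    rw [QuotientGroup.eq, inv_inv, hkg]
    exact H.inv_mem hh
  rw [relIndex, ← hstab, MulAction.index_stabilizer, horbit, Set.ncard_univ, index]

theorem index_inf_of_mul_eq_univ {H K : Subgroup G}
    (hHK : (H : Set G) * (K : Set G) = Set.univ) : (H ⊓ K).index = H.index * K.index := by
  rw [← relIndex_mul_index inf_le_right, inf_relIndex_right,
    relIndex_eq_index_of_mul_eq_univ hHK]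

theorem commutatorElement_mem_of_mem_sup {H K : Subgroup G} [H.Normal] [IsMulCommutative K]
    {u v : G} (hu : u ∈ H ⊔ K) (hv : v ∈ H ⊔ K) : ⁅u, v⁆ ∈ H := by
  rw [sup_comm, ← SetLike.mem_coe, mul_normal] at hu hv
  obtain ⟨k₁, hk₁, h₁, hh₁, rfl⟩ := hu
  obtain ⟨k₂, hk₂, h₂, hh₂, rfl⟩ := hv
  rw [← QuotientGroup.eq_one_iff, ← QuotientGroup.mk'_apply, map_commutatorElement]
  simp only [map_mul, QuotientGroup.mk'_apply, (QuotientGroup.eq_one_iff _).mpr hh₁,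
    (QuotientGroup.eq_one_iff _).mpr hh₂, mul_one]
  rw [← QuotientGroup.mk'_apply, ← QuotientGroup.mk'_apply, ← map_commutatorElement,
    commutatorElement_eq_one_iff_mul_comm.mpr (setLike_mul_comm hk₁ hk₂),
    map_one]

theorem isNilpotent_of_commutatorElement_mem_center {L : Type*} [Group L]
    (h : ∀ x y : L, ⁅x, y⁆ ∈ center L) : Group.IsNilpotent L :=
  ⟨2, eq_top_iff.mpr fun x _ => mem_upperCentralSeries_succ_iff.mpr fun y => by
    simpa [upperCentralSeries_one] using h x y⟩

theorem isNilpotent_sup_of_isMulCommutative (H K : Subgroup G) [H.Normal] [K.Normal]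
    [IsMulCommutative H] [IsMulCommutative K] : Group.IsNilpotent ↥(H ⊔ K) := by
  refine isNilpotent_of_commutatorElement_mem_center fun u v => mem_center_iff.mpr fun w => ?_
  have hc : ((⁅u, v⁆ : ↥(H ⊔ K)) : G) = ⁅(u : G), (v : G)⁆ :=
    map_commutatorElement (H ⊔ K).subtype u v
  have hH : ((⁅u, v⁆ : ↥(H ⊔ K)) : G) ∈ H := hc ▸ commutatorElement_mem_of_mem_sup u.2 v.2
  have hK : ((⁅u, v⁆ : ↥(H ⊔ K)) : G) ∈ K := hc ▸
    commutatorElement_mem_of_mem_sup (H := K) (K := H) (sup_comm H K ▸ u.2) (sup_comm H K ▸ v.2)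
  have hcentral : H ⊔ K ≤ centralizer {((⁅u, v⁆ : ↥(H ⊔ K)) : G)} := sup_le
    (fun h hh => mem_centralizer_singleton_iff.mpr (setLike_mul_comm hh hH))
    (fun k hk => mem_centralizer_singleton_iff.mpr (setLike_mul_comm hk hK))
  exact Subtype.ext (mem_centralizer_singleton_iff.mp (hcentral w.2))

theorem eq_and_eq_of_mul_eq_mul {H K : Subgroup G} (hHK : Disjoint H K) {a a' b b' : G}
    (ha : a ∈ H) (ha' : a' ∈ H) (hb : b ∈ K) (hb' : b' ∈ K) (h : a * b = a' * b') :
    a = a' ∧ b = b' := by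
  simpa [Prod.ext_iff] using
    mul_injective_of_disjoint hHK (a₁ := (⟨a, ha⟩, ⟨b, hb⟩)) (a₂ := (⟨a', ha'⟩, ⟨b', hb'⟩)) h

def primaryComponent (N : Subgroup G) [IsMulCommutative N] (p : ℕ) : Subgroup G where
  carrier := {g | g ∈ N ∧ ∃ k : ℕ, g ^ p ^ k = 1}
  one_mem' := ⟨N.one_mem, 0, one_pow _⟩
  mul_mem' := by
    rintro a b ⟨ha, k, hak⟩ ⟨hb, l, hbl⟩
    refine ⟨N.mul_mem ha hb, k + l, ?_⟩
    rw [(show Commute a b from setLike_mul_comm ha hb).mul_pow, pow_add, pow_mul, hak, one_pow,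
      one_mul, mul_comm, pow_mul, hbl, one_pow]
  inv_mem' := by
    rintro a ⟨ha, k, hak⟩
    exact ⟨N.inv_mem ha, k, by rw [inv_pow, hak, inv_one]⟩

variable {N : Subgroup G} [IsMulCommutative N] {p : ℕ}

instance primaryComponent_normal [N.Normal] : (N.primaryComponent p).Normal where
  conj_mem g := by
    rintro ⟨hg, k, hgk⟩ h
    exact ⟨Normal.conj_mem ‹_› g hg h, k, by rw [conj_pow, hgk, mul_one, mul_inv_cancel]⟩

theorem primaryComponent_isPGroup : IsPGroup p (N.primaryComponent p) :=
  fun ⟨_, _, k, hk⟩ => ⟨k, Subtype.ext hk⟩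

end Subgroup

section

variable {G : Type*} [Group G]

theorem conj_pow_eq_mul_pow_of_conj_eq_mul {y f e : G} (hye : Commute y e)
    (he : y * f * y⁻¹ = f * e) (n : ℕ) : y ^ n * f * (y ^ n)⁻¹ = f * e ^ n := by
  induction n with
  | zero => simp
  | succ n ih =>
    calc y ^ (n + 1) * f * (y ^ (n + 1))⁻¹ = y * (y ^ n * f * (y ^ n)⁻¹) * y⁻¹ := by group
      _ = y * f * y⁻¹ * (y * e ^ n * y⁻¹) := by rw [ih]; group
      _ = f * e ^ (n + 1) := by
        rw [he, (hye.pow_right n).eq, mul_inv_cancel_right, mul_assoc, ← pow_succ']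

theorem pow_eq_one_of_conj_eq_mul {y f e : G} (hye : Commute y e) (he : y * f * y⁻¹ = f * e)
    {n : ℕ} (hn : Commute (y ^ n) f) : e ^ n = 1 := by
  have h := conj_pow_eq_mul_pow_of_conj_eq_mul hye he n
  rwa [hn.eq, mul_inv_cancel_right, eq_comm, mul_eq_left] at h

end

theorem IsPGroup.zpowers_of_pow_eq_one {G : Type*} [Group G] {p k : ℕ} {w : G}
    (hw : w ^ p ^ k = 1) : IsPGroup p (Subgroup.zpowers w) :=
  isPGroup_iff_orderOf_dvd_pow.mpr fun g => ⟨k, by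
    rw [← Subgroup.orderOf_coe]
    exact (orderOf_dvd_of_mem_zpowers g.2).trans (orderOf_dvd_of_pow_eq_one hw)⟩

namespace IsAGroup

variable {G : Type*} [Group G]

theorem commute_of_isPGroup (hA : IsAGroup G) {p : ℕ} (hp : p.Prime) {P : Subgroup G}
    (hP : IsPGroup p P) {a b : G} (ha : a ∈ P) (hb : b ∈ P) : Commute a b := by
  have := Fact.mk hp
  obtain ⟨Q, hPQ⟩ := hP.exists_le_sylow
  exact congrArg Subtype.val (hA p hp Q ⟨a, hPQ ha⟩ ⟨b, hPQ hb⟩)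

theorem subgroup (hA : IsAGroup G) (H : Subgroup G) : IsAGroup H := fun _ hp P a b =>
  Subtype.ext <| Subtype.ext <| hA.commute_of_isPGroup hp (P.isPGroup'.map H.subtype)
    (Subgroup.mem_map_of_mem _ a.2) (Subgroup.mem_map_of_mem _ b.2)

theorem isMulCommutative_of_isNilpotent [Finite G] [Group.IsNilpotent G] (hA : IsAGroup G) :
    IsMulCommutative G := by
  obtain ⟨e⟩ := (Group.isNilpotent_of_finite_tfae (G := G)).out 0 4 |>.mp ‹_›
  refine ⟨⟨fun a b => ?_⟩⟩
  obtain ⟨u, rfl⟩ := e.surjective a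
  obtain ⟨v, rfl⟩ := e.surjective b
  rw [← map_mul, ← map_mul]
  congr 1
  funext p P
  exact hA p (Nat.prime_of_mem_primeFactors p.2) P _ _

theorem isMulCommutative_fitting [Finite G] (hA : IsAGroup G) : IsMulCommutative (fitting G) := by
  have hle : ∀ H K : Subgroup G, H.Normal ∧ Group.IsNilpotent H →
      K.Normal ∧ Group.IsNilpotent K → H ≤ Subgroup.centralizer K := by
    rintro H K ⟨_, _⟩ ⟨_, _⟩ h hh k hk
    have := (hA.subgroup H).isMulCommutative_of_isNilpotent
    have := (hA.subgroup K).isMulCommutative_of_isNilpotent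
    have := Subgroup.isNilpotent_sup_of_isMulCommutative H K
    have := (hA.subgroup (H ⊔ K)).isMulCommutative_of_isNilpotent
    exact setLike_mul_comm (s := H ⊔ K) (Subgroup.mem_sup_right hk) (Subgroup.mem_sup_left hh)
  rw [← Subgroup.le_centralizer_iff_isMulCommutative]
  refine iSup₂_le fun H hH => Subgroup.le_centralizer_iff.mp ?_
  exact iSup₂_le fun K hK => hle K H hK hH

theorem commute_of_mem_primaryComponent (hA : IsAGroup G) {N : Subgroup G} [N.Normal]
    [IsMulCommutative N] {q k : ℕ} (hq : q.Prime) {w z : G} (hw : w ^ q ^ k = 1)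
    (hz : z ∈ N.primaryComponent q) : Commute w z :=
  hA.commute_of_isPGroup hq
    ((IsPGroup.zpowers_of_pow_eq_one hw).to_sup_of_normal_right
      Subgroup.primaryComponent_isPGroup)
    (Subgroup.mem_sup_left (Subgroup.mem_zpowers w)) (Subgroup.mem_sup_right hz)

theorem eq_one_of_conj_eq_mul [Finite G] (hA : IsAGroup G) {N : Subgroup G} [N.Normal]
    [IsMulCommutative N] {y f e : G} (hf : f ∈ N) (hye : Commute y e)
    (he : y * f * y⁻¹ = f * e) : e = 1 := by
  have heN : e ∈ N := by
    rw [show e = f⁻¹ * (y * f * y⁻¹) by rw [he, inv_mul_cancel_left]]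
    exact N.mul_mem (N.inv_mem hf) (Subgroup.Normal.conj_mem ‹_› f hf y)
  have hconj_pow (n : ℕ) : y * f ^ n * y⁻¹ = f ^ n * e ^ n := by
    rw [← conj_pow, he, (show Commute f e from setLike_mul_comm hf heN).mul_pow]
  rw [← orderOf_eq_one_iff, Nat.eq_one_iff_not_exists_prime_dvd]
  intro q hq hqe
  set a := (orderOf f).factorization q
  set m := orderOf f / q ^ a
  set b := (orderOf y).factorization q
  set m' := orderOf y / q ^ b
  have hfm : f ^ m ∈ N.primaryComponent q := ⟨N.pow_mem hf m, a, by
    rw [← pow_mul, mul_comm, Nat.ordProj_mul_ordCompl_eq_self, pow_orderOf_eq_one]⟩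
  have hym' : (y ^ m') ^ q ^ b = 1 := by
    rw [← pow_mul, mul_comm, Nat.ordProj_mul_ordCompl_eq_self, pow_orderOf_eq_one]
  have hem_q : (e ^ m) ^ q ^ a = 1 := by
    have := hconj_pow (orderOf f)
    rwa [pow_orderOf_eq_one, mul_one, mul_inv_cancel, one_mul, eq_comm,
      ← Nat.ordProj_mul_ordCompl_eq_self (orderOf f) q, mul_comm, pow_mul] at this
  have hem_m' : (e ^ m) ^ m' = 1 :=
    pow_eq_one_of_conj_eq_mul (hye.pow_right m) (hconj_pow m)
      (hA.commute_of_mem_primaryComponent hq hym' hfm)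
  have hem : e ^ m = 1 := (pow_eq_one_iff_of_coprime
    ((Nat.coprime_ordCompl hq (orderOf_pos y).ne').pow_left a)).mp ⟨hem_q, hem_m'⟩
  exact (Nat.Prime.coprime_iff_not_dvd hq).mp (Nat.coprime_ordCompl hq (orderOf_pos f).ne')
    (hqe.trans (orderOf_dvd_of_pow_eq_one hem))

open Subgroup in
theorem centralizer_mul_eq_inf [Finite G] (hA : IsAGroup G)
    {N T : Subgroup G} [N.Normal] [IsMulCommutative N] (hdisj : Disjoint N T)
    (hNT : (N : Set G) * (T : Set G) = Set.univ) {x y : G} (hx : x ∈ N) (hy : y ∈ T)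
    (hxy : Commute x y) :
    centralizer {x * y} = centralizer {x} ⊓ centralizer {y} := by
  refine le_antisymm (fun g hg => ?_) fun g ⟨hgx, hgy⟩ => mem_centralizer_singleton_iff.mpr
    ((show Commute g x from mem_centralizer_singleton_iff.mp hgx).mul_right
      (mem_centralizer_singleton_iff.mp hgy))
  obtain ⟨f, hf, t, ht, rfl⟩ : g ∈ (N : Set G) * (T : Set G) := hNT ▸ Set.mem_univ g
  obtain ⟨hN, hty⟩ := eq_and_eq_of_mul_eq_mul hdisj
    (N.mul_mem hf (Normal.conj_mem ‹_› x hx t)) (N.mul_mem hx (Normal.conj_mem ‹_› f hf y))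
    (T.mul_mem ht hy) (T.mul_mem hy ht)
    (calc f * (t * x * t⁻¹) * (t * y) = f * t * (x * y) := by group
      _ = x * y * (f * t) := mem_centralizer_singleton_iff.mp hg
      _ = x * (y * f * y⁻¹) * (y * t) := by group)
  have hxf : Commute x f := setLike_mul_comm hx hf
  obtain ⟨e, he⟩ : ∃ e, y * f * y⁻¹ = f * e := ⟨f⁻¹ * (y * f * y⁻¹), by rw [mul_inv_cancel_left]⟩
  have htx : t * x * t⁻¹ = x * e :=
    mul_left_cancel (a := f) (by rw [hN, he, ← mul_assoc, ← mul_assoc, hxf.eq])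
  have hye : Commute y e := by
    rw [show e = x⁻¹ * (t * x * t⁻¹) by rw [htx, inv_mul_cancel_left]]
    have hyt : Commute y t := hty.symm
    exact hxy.symm.inv_right.mul_right ((hyt.mul_right hxy.symm).mul_right hyt.inv_right)
  obtain rfl : e = 1 := hA.eq_one_of_conj_eq_mul hf hye he
  rw [mul_one] at he htx
  have htx' : Commute t x := mul_inv_eq_iff_eq_mul.mp htx
  have hyf : Commute y f := mul_inv_eq_iff_eq_mul.mp he
  exact ⟨mem_centralizer_singleton_iff.mpr (hxf.symm.mul_left htx'),
    mem_centralizer_singleton_iff.mpr (hyf.symm.mul_left hty)⟩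

end IsAGroup

open scoped Pointwise in
/-- Let `G` be a finite `A`-group with `G = F ⋊ T` an internal semidirect
product, `F = F(G)` the Fitting subgroup. Let `x ∈ F` and `y ∈ T` with `xy = yx`. Then
`C_G(xy) = C_G(x) ∩ C_G(y)`; moreover, if `C_G(x)C_G(y) = G` then
`Ind(G, xy) = Ind(G, x) · Ind(G, y)`. -/
theorem stmt_14 (G : Type*) [Group G] [Finite G] (hA : IsAGroup G)
    (T : Subgroup G) (hdisj : fitting G ⊓ T = ⊥)
    (hgen : (fitting G : Set G) * (T : Set G) = Set.univ)
    (x y : G) (hx : x ∈ fitting G) (hy : y ∈ T) (hxy : x * y = y * x) :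
    Subgroup.centralizer {x * y} = Subgroup.centralizer {x} ⊓ Subgroup.centralizer {y} ∧
    ((Subgroup.centralizer {x} : Set G) * (Subgroup.centralizer {y} : Set G) = Set.univ →
      (Subgroup.centralizer {x * y}).index
        = (Subgroup.centralizer {x}).index * (Subgroup.centralizer {y}).index) := by
  have := hA.isMulCommutative_fitting
  have hcent := hA.centralizer_mul_eq_inf (disjoint_iff.mpr hdisj) hgen hx hy hxy
  exact ⟨hcent, fun hmul => by rw [hcent, Subgroup.index_inf_of_mul_eq_univ hmul]⟩
end
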